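/- arXiv:1610.06696 — 15 statements merged into one kernel-verified Lean document; each statement's English description precedes it below -/
import Mathlib

section
/- Let X be a locally compact Hausdorff space and let S be a subset of Homeo(X) whose closure in the compact-open topology is compact. Then S is equicontinuous with respect to every uniformity compatible with the topology of X. -/
open Topology

/-- The compact-open topology on the self-homeomorphisms of `X`, induced from the
compact-open topology on continuous maps `C(X, X)`. -/
noncomputable def homeoCompactOpen (X : Type*) [TopologicalSpace X] :
    TopologicalSpace (X ≃ₜ X) :=
  TopologicalSpace.induced (fun h => (h : C(X, X))) ContinuousMap.compactOpen

/- Near `(x₀, f)` the pair `(g x₀, g y)` is close to the diagonal point `(f x₀, f x₀)`;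
compactness of `K` makes the neighbourhood of `x₀` uniform in `f ∈ K`. -/
theorem IsCompact.equicontinuous_of_continuousEval {F X α : Type*} [TopologicalSpace F]
    [TopologicalSpace X] [UniformSpace α] [FunLike F X α] [ContinuousEval F X α] {K : Set F}
    (hK : IsCompact K) : Equicontinuous fun f : K => ⇑(f : F) := by
  intro x₀ E hE
  have hnear : ∀ f ∈ K, ∀ᶠ p : X × F in 𝓝 (x₀, f), (p.2 x₀, p.2 p.1) ∈ E := by
    intro f _
    have hcont : Continuous fun p : X × F => (p.2 x₀, p.2 p.1) := by fun_prop
    exact hcont.continuousAt.eventually (nhds_le_uniformity (f x₀) hE)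
  filter_upwards [hK.eventually_forall_of_forall_eventually
    (P := fun y f => (f x₀, f y) ∈ E) hnear] with y hy f
  exact hy f f.2

theorem compact_closure_homeo_equicontinuous_general {X : Type*} [TopologicalSpace X]
    [LocallyCompactSpace X] (S : Set (X ≃ₜ X))
    (hS : @IsCompact _ (homeoCompactOpen X) (@closure _ (homeoCompactOpen X) S))
    (u : UniformSpace X) (hu : u.toTopologicalSpace = ‹TopologicalSpace X›) :
    ∀ E ∈ @uniformity X u, ∀ x : X, ∃ U ∈ 𝓝 x, ∀ s ∈ S, ∀ y ∈ U, (s x, s y) ∈ E := by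
  subst hu
  let := homeoCompactOpen X
  set T : Set C(X, X) := (fun h : X ≃ₜ X => (h : C(X, X))) '' closure S
  have hT : IsCompact T := hS.image continuous_induced_dom
  have hST : ∀ s ∈ S, (s : C(X, X)) ∈ T := fun s hs => ⟨s, subset_closure hs, rfl⟩
  intro E hE x
  exact ⟨_, hT.equicontinuous_of_continuousEval x E hE, fun s hs y hy => hy ⟨s, hST s hs⟩⟩

/-- Let `X` be a locally compact Hausdorff space and `S` a set of self-homeomorphisms of `X`
whose closure in the compact-open topology is compact.  Then `S` is equicontinuous with
respect to every uniformity compatible with the topology of `X`. -/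
theorem compact_closure_homeo_equicontinuous {X : Type*} [TopologicalSpace X]
    [LocallyCompactSpace X] [T2Space X] (S : Set (X ≃ₜ X))
    (hS : @IsCompact _ (homeoCompactOpen X) (@closure _ (homeoCompactOpen X) S))
    (u : UniformSpace X) (hu : u.toTopologicalSpace = ‹TopologicalSpace X›) :
    ∀ E ∈ @uniformity X u, ∀ x : X, ∃ U ∈ 𝓝 x, ∀ s ∈ S, ∀ y ∈ U, (s x, s y) ∈ E :=
  compact_closure_homeo_equicontinuous_general S hS u hu
end

section
/- Let G be a topological group, let S be a set of automorphisms of G, let H ≤ L ≤ K ≤ G be closed S-invariant subgroups, and let x ∈ K. If the coset xH is an equicontinuous point of the action of S on G/H, then the coset xL is an equicontinuous point of the action of S on K/L. -/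
open Topology Pointwise

theorem Subgroup.mul_singleton_mul_inter_subset {G : Type*} [Group G] {H K : Subgroup G}
    (hHK : H ≤ K) (U : Set G) {b : G} (hb : b ∈ K) :
    U * {b} * (H : Set G) ∩ K ⊆ (U ∩ K) * {b} * (H : Set G) := by
  rintro a ⟨⟨_, ⟨u, hu, c, hc, rfl⟩, h, hh, rfl⟩, ha⟩
  rw [Set.mem_singleton_iff] at hc
  subst c
  have huK : u ∈ K := by
    simpa using K.mul_mem (K.mul_mem ha (K.inv_mem (hHK hh))) (K.inv_mem hb)
  exact ⟨u * b, ⟨u, ⟨hu, huK⟩, b, rfl, rfl⟩, h, hh, rfl⟩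

theorem equicontinuous_point_quotient_general {G : Type*} [Group G] [TopologicalSpace G]
    (S : Set (G ≃* G)) (H L K : Subgroup G)
    (hHL : H ≤ L) (hLK : L ≤ K)
    (hKinv : ∀ s ∈ S, ⇑s '' (K : Set G) = (K : Set G))
    (x : G) (hx : x ∈ K)
    (hEq : ∀ U ∈ 𝓝 (1 : G), ∃ V ∈ 𝓝 x, ∀ s ∈ S, ∀ y ∈ V,
      s x ∈ U * ({s y} : Set G) * (H : Set G)) :
    ∀ U ∈ 𝓝 (1 : G), ∃ V ∈ 𝓝 x, ∀ s ∈ S, ∀ y ∈ V ∩ (K : Set G),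
      s x ∈ (U ∩ (K : Set G)) * ({s y} : Set G) * (L : Set G) := by
  intro U hU
  obtain ⟨V, hV, hVs⟩ := hEq U hU
  refine ⟨V, hV, fun s hs y ⟨hyV, hyK⟩ => ?_⟩
  have hsK : ∀ z ∈ K, s z ∈ K := fun z hz => (hKinv s hs).subset (Set.mem_image_of_mem s hz)
  have hsxH : s x ∈ (U ∩ K) * {s y} * (H : Set G) :=
    Subgroup.mul_singleton_mul_inter_subset (hHL.trans hLK) U (hsK y hyK)
      ⟨hVs s hs y hyV, hsK x hx⟩
  exact Set.mul_subset_mul_left hHL hsxH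

/-- Equicontinuous points pass to quotient coset spaces: if `H ≤ L ≤ K ≤ G` are closed
`S`-invariant subgroups and `xH` is an equicontinuous point of the action of `S` on `G/H`,
then `xL` is an equicontinuous point of the action of `S` on `K/L`.  Here the coset space
`M/N` carries the right uniformity with basic entourages `{(aN, bN) : aN ⊆ U b N}` for `U`
an identity neighbourhood of `M`, and identity neighbourhoods and neighbourhoods of `x`
in the subgroup `K` are realized as intersections with `K` of such neighbourhoods in `G`. -/
theorem equicontinuous_point_quotient {G : Type*} [Group G] [TopologicalSpace G]
    [IsTopologicalGroup G] (S : Set (G ≃* G)) (H L K : Subgroup G)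
    (hHL : H ≤ L) (hLK : L ≤ K)
    (hHc : IsClosed (H : Set G)) (hLc : IsClosed (L : Set G)) (hKc : IsClosed (K : Set G))
    (hHinv : ∀ s ∈ S, ⇑s '' (H : Set G) = (H : Set G))
    (hLinv : ∀ s ∈ S, ⇑s '' (L : Set G) = (L : Set G))
    (hKinv : ∀ s ∈ S, ⇑s '' (K : Set G) = (K : Set G))
    (x : G) (hx : x ∈ K)
    (hEq : ∀ U ∈ 𝓝 (1 : G), ∃ V ∈ 𝓝 x, ∀ s ∈ S, ∀ y ∈ V,
      s x ∈ U * ({s y} : Set G) * (H : Set G)) :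
    ∀ U ∈ 𝓝 (1 : G), ∃ V ∈ 𝓝 x, ∀ s ∈ S, ∀ y ∈ V ∩ (K : Set G),
      s x ∈ (U ∩ (K : Set G)) * ({s y} : Set G) * (L : Set G) :=
  equicontinuous_point_quotient_general S H L K hHL hLK hKinv x hx hEq
end

section
/- Let G be a topological group and let K be a group of automorphisms of G of the form K = HS, where H is a subgroup of K and S = S⁻¹ is an equicontinuous set of automorphisms of G containing the identity. Then every open H-invariant subgroup of G contains an open K-invariant subgroup of G; consequently the discrete residuals coincide: Res_G(H) = Res_G(K). -/
open Topology Pointwise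

/-- The discrete residual of a group `A` of automorphisms of `G`: the intersection of all
open `A`-invariant subgroups of `G`. -/
def discreteResidual {G : Type*} [Group G] [TopologicalSpace G]
    (A : Subgroup (MulAut G)) : Subgroup G :=
  sInf {O : Subgroup G | IsOpen (O : Set G) ∧ ∀ a ∈ A, ⇑a '' (O : Set G) = (O : Set G)}

/-!
For an open `H`-invariant subgroup `O`, the core `⋂_{k ∈ K} k⁻¹ O` is a `K`-invariant subgroup
contained in `O`. Writing `k = h s` and using `h⁻¹ O = O`, it equals `⋂_{s ∈ S} s⁻¹ O`, which
contains a neighbourhood of `1` by equicontinuity of `S` at `1`; a subgroup that is a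
neighbourhood of `1` is open.
-/

namespace Subgroup

variable {G : Type*} [Group G]

def autCore (S : Set (MulAut G)) (O : Subgroup G) : Subgroup G :=
  ⨅ s ∈ S, O.comap (s : MulAut G).toMonoidHom

theorem mem_autCore {S : Set (MulAut G)} {O : Subgroup G} {g : G} :
    g ∈ autCore S O ↔ ∀ s ∈ S, s g ∈ O := by
  simp [autCore, mem_iInf]

theorem autCore_le {S : Set (MulAut G)} {O : Subgroup G} (hone : (1 : MulAut G) ∈ S) :
    autCore S O ≤ O :=
  fun _ hg => mem_autCore.1 hg 1 hone

theorem autCore_mul_of_invariant {H : Subgroup (MulAut G)} {S : Set (MulAut G)}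
    {O : Subgroup G} (hO : ∀ h ∈ H, ⇑h '' (O : Set G) = (O : Set G)) :
    autCore ((H : Set (MulAut G)) * S) O = autCore S O := by
  ext g
  simp only [mem_autCore]
  refine ⟨fun hg s hs => by simpa using hg (1 * s) (Set.mul_mem_mul H.one_mem hs), ?_⟩
  rintro hg _ ⟨h, hh, s, hs, rfl⟩
  rw [MulAut.mul_apply, ← SetLike.mem_coe, ← hO h hh, h.injective.mem_set_image]
  exact hg s hs

theorem image_autCore_of_mem {K : Subgroup (MulAut G)} {O : Subgroup G} {k : MulAut G}
    (hk : k ∈ K) : ⇑k '' (autCore K O : Set G) = autCore K O := by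
  ext g
  simp only [Set.mem_image, SetLike.mem_coe, mem_autCore]
  refine ⟨?_, fun hg => ⟨k⁻¹ g, fun k' hk' => ?_, by simp⟩⟩
  · rintro ⟨x, hx, rfl⟩ k' hk'
    exact hx (k' * k) (K.mul_mem hk' hk)
  · simpa using hg (k' * k⁻¹) (K.mul_mem hk' (K.inv_mem hk))

variable [TopologicalSpace G] [SeparatelyContinuousMul G]

theorem isOpen_autCore {S : Set (MulAut G)} {O : Subgroup G} (hO : IsOpen (O : Set G))
    (hS : ∀ U ∈ 𝓝 (1 : G), ∃ V ∈ 𝓝 (1 : G), ∀ s ∈ S, ∀ z ∈ V, s 1 * (s z)⁻¹ ∈ U) :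
    IsOpen (autCore S O : Set G) := by
  obtain ⟨V, hV, hVO⟩ := hS O (hO.mem_nhds O.one_mem)
  refine isOpen_of_mem_nhds _ (g := 1) (Filter.mem_of_superset hV fun z hz => ?_)
  exact mem_autCore.2 fun s hs => by simpa using hVO s hs z hz

end Subgroup

theorem discreteResidual_mono {G : Type*} [Group G] [TopologicalSpace G]
    {H K : Subgroup (MulAut G)} (hHK : H ≤ K) : discreteResidual H ≤ discreteResidual K :=
  sInf_le_sInf fun _ ⟨hO, hinv⟩ => ⟨hO, fun h hh => hinv h (hHK hh)⟩

theorem discreteResidual_le_of_forall_exists_le {G : Type*} [Group G] [TopologicalSpace G]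
    {H K : Subgroup (MulAut G)}
    (h : ∀ O : Subgroup G, IsOpen (O : Set G) → (∀ a ∈ H, ⇑a '' (O : Set G) = (O : Set G)) →
      ∃ P : Subgroup G, IsOpen (P : Set G) ∧
        (∀ k ∈ K, ⇑k '' (P : Set G) = (P : Set G)) ∧ P ≤ O) :
    discreteResidual K ≤ discreteResidual H :=
  le_sInf fun O ⟨hO, hinv⟩ => by
    obtain ⟨P, hP, hPinv, hPO⟩ := h O hO hinv
    exact (sInf_le ⟨hP, hPinv⟩ : discreteResidual K ≤ P).trans hPO

theorem exists_isOpen_invariant_le_of_eq_mul {G : Type*} [Group G] [TopologicalSpace G]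
    [SeparatelyContinuousMul G] {H K : Subgroup (MulAut G)} {S : Set (MulAut G)}
    (hone : (1 : MulAut G) ∈ S) (hK : (K : Set (MulAut G)) = (H : Set (MulAut G)) * S)
    (hS : ∀ U ∈ 𝓝 (1 : G), ∃ V ∈ 𝓝 (1 : G), ∀ s ∈ S, ∀ z ∈ V, s 1 * (s z)⁻¹ ∈ U)
    {O : Subgroup G} (hO : IsOpen (O : Set G))
    (hinv : ∀ h ∈ H, ⇑h '' (O : Set G) = (O : Set G)) :
    ∃ P : Subgroup G, IsOpen (P : Set G) ∧
      (∀ k ∈ K, ⇑k '' (P : Set G) = (P : Set G)) ∧ P ≤ O := by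
  have hcore : Subgroup.autCore K O = Subgroup.autCore S O := by
    rw [hK, Subgroup.autCore_mul_of_invariant hinv]
  refine ⟨Subgroup.autCore K O, ?_, fun k hk => Subgroup.image_autCore_of_mem hk, ?_⟩
  · exact hcore ▸ Subgroup.isOpen_autCore hO hS
  · exact hcore ▸ Subgroup.autCore_le hone

theorem residual_eq_of_equicontinuous_complement_general {G : Type*} [Group G] [TopologicalSpace G]
    [IsTopologicalGroup G] (H K : Subgroup (MulAut G)) (S : Set (MulAut G))
    (hHK : H ≤ K) (hone : (1 : MulAut G) ∈ S)
    (hK : (K : Set (MulAut G)) = (H : Set (MulAut G)) * S)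
    (hSequi : ∀ x : G, ∀ U ∈ 𝓝 (1 : G), ∃ V ∈ 𝓝 x, ∀ s ∈ S, ∀ z ∈ V,
      s x * (s z)⁻¹ ∈ U) :
    (∀ O : Subgroup G, IsOpen (O : Set G) → (∀ h ∈ H, ⇑h '' (O : Set G) = (O : Set G)) →
      ∃ P : Subgroup G, IsOpen (P : Set G) ∧
        (∀ k ∈ K, ⇑k '' (P : Set G) = (P : Set G)) ∧ P ≤ O) ∧
    discreteResidual H = discreteResidual K := by
  have hcore := fun O hO hinv =>
    exists_isOpen_invariant_le_of_eq_mul (O := O) hone hK (hSequi 1) hO hinv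
  exact ⟨hcore, (discreteResidual_mono hHK).antisymm
    (discreteResidual_le_of_forall_exists_le hcore)⟩

/-- Let `K = H S` be a group of automorphisms of `G`, where `H ≤ K` is a subgroup and
`S = S⁻¹` is an equicontinuous set of automorphisms containing the identity.  Then every
open `H`-invariant subgroup of `G` contains an open `K`-invariant subgroup, and
consequently `Res_G(H) = Res_G(K)`. -/
theorem residual_eq_of_equicontinuous_complement {G : Type*} [Group G] [TopologicalSpace G]
    [IsTopologicalGroup G] (H K : Subgroup (MulAut G)) (S : Set (MulAut G))
    (hcont : ∀ k ∈ K, Continuous ⇑k)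
    (hHK : H ≤ K) (hone : (1 : MulAut G) ∈ S) (hSinv : S⁻¹ = S)
    (hK : (K : Set (MulAut G)) = (H : Set (MulAut G)) * S)
    (hSequi : ∀ x : G, ∀ U ∈ 𝓝 (1 : G), ∃ V ∈ 𝓝 x, ∀ s ∈ S, ∀ z ∈ V,
      s x * (s z)⁻¹ ∈ U) :
    (∀ O : Subgroup G, IsOpen (O : Set G) → (∀ h ∈ H, ⇑h '' (O : Set G) = (O : Set G)) →
      ∃ P : Subgroup G, IsOpen (P : Set G) ∧
        (∀ k ∈ K, ⇑k '' (P : Set G) = (P : Set G)) ∧ P ≤ O) ∧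
    discreteResidual H = discreteResidual K :=
  residual_eq_of_equicontinuous_complement_general H K S hHK hone hK hSequi
end

section
/- Let G be a topological group, let K be a closed subgroup of G, and let O be a nonempty open symmetric subset of G with O = KOK and O ⊆ UK for some open subgroup U of G. Then the subgroup generated by O equals VK for some open subgroup V of U. -/
open Pointwise

/-!
The subgroup `H` generated by `O` contains the nonempty open set `O`, so it is open, and it
contains `K` because `k = (k o) o⁻¹` with `k o ∈ K O ⊆ O`. Since `U K O ⊆ U O ⊆ U U K = U K`
and `O` is symmetric, `H ⊆ U K`. The modular law `(H ⊓ U) K = H ∩ U K` for `K ≤ H` then shows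
that `V = H ⊓ U` works.
-/

namespace Subgroup

variable {G : Type*} [Group G]

theorem le_closure_of_mul_subset {K : Subgroup G} {O : Set G} (hne : O.Nonempty)
    (hKO : (K : Set G) * O ⊆ O) : K ≤ closure O := by
  obtain ⟨o, ho⟩ := hne
  intro k hk
  have hko : k * o ∈ closure O := subset_closure (hKO (Set.mul_mem_mul hk ho))
  simpa using mul_mem hko (inv_mem (subset_closure ho))

theorem closure_subset_of_mul_subset {S O : Set G} (h1 : (1 : G) ∈ S) (hSO : S * O ⊆ S)
    (hSOinv : S * O⁻¹ ⊆ S) : (closure O : Set G) ⊆ S := by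
  intro x hx
  induction hx using closure_induction_right with
  | one => exact h1
  | mul_right x _ y hy ih => exact hSO (Set.mul_mem_mul ih hy)
  | mul_inv_cancel x _ y hy ih => exact hSOinv (Set.mul_mem_mul ih (Set.inv_mem_inv.2 hy))

theorem mul_subset_of_subset_mul {U K : Subgroup G} {O : Set G} (hKO : (K : Set G) * O ⊆ O)
    (hOU : O ⊆ (U : Set G) * K) : (U : Set G) * K * O ⊆ (U : Set G) * K :=
  calc (U : Set G) * K * O = U * (K * O) := mul_assoc _ _ _
    _ ⊆ U * O := Set.mul_subset_mul_left hKO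
    _ ⊆ U * (U * K) := Set.mul_subset_mul_left hOU
    _ = U * K := by rw [← mul_assoc, coe_mul_coe]

theorem closure_subset_mul_of_inv_eq {U K : Subgroup G} {O : Set G} (hsymm : O⁻¹ = O)
    (hKO : (K : Set G) * O ⊆ O) (hOU : O ⊆ (U : Set G) * K) :
    (closure O : Set G) ⊆ (U : Set G) * K := by
  have hUKO := mul_subset_of_subset_mul hKO hOU
  refine closure_subset_of_mul_subset ⟨1, U.one_mem, 1, K.one_mem, mul_one 1⟩ hUKO ?_
  rwa [hsymm]

theorem isOpen_of_isOpen_subset [TopologicalSpace G] [SeparatelyContinuousMul G]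
    (H : Subgroup G) {O : Set G} (hO : IsOpen O) (hne : O.Nonempty) (hOH : O ⊆ H) :
    IsOpen (H : Set G) :=
  let ⟨_, ho⟩ := hne
  isOpen_of_mem_nhds H (Filter.mem_of_superset (hO.mem_nhds ho) hOH)

end Subgroup

theorem subgroup_closure_eq_open_mul_coset_general {G : Type*} [Group G] [TopologicalSpace G]
    [IsTopologicalGroup G] (K : Subgroup G)
    (O : Set G) (hO : IsOpen O) (hne : O.Nonempty) (hsymm : O⁻¹ = O)
    (hKOK : (K : Set G) * O * (K : Set G) = O)
    (U : Subgroup G) (hU : IsOpen (U : Set G)) (hOU : O ⊆ (U : Set G) * (K : Set G)) :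
    ∃ V : Subgroup G, V ≤ U ∧ IsOpen (V : Set G) ∧
      (V : Set G) * (K : Set G) = (Subgroup.closure O : Set G) := by
  have hKO : (K : Set G) * O ⊆ O := by
    nth_rw 2 [← hKOK]
    exact Set.subset_mul_left _ K.one_mem
  have hH : IsOpen (Subgroup.closure O : Set G) :=
    Subgroup.isOpen_of_isOpen_subset _ hO hne Subgroup.subset_closure
  refine ⟨Subgroup.closure O ⊓ U, inf_le_right, hH.inter hU, ?_⟩
  rw [Subgroup.inf_mul_assoc _ _ _ (Subgroup.le_closure_of_mul_subset hne hKO)]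
  exact Set.inter_eq_left.2 (Subgroup.closure_subset_mul_of_inv_eq hsymm hKO hOU)

/-- Let `G` be a topological group, `K` a closed subgroup and `O` a nonempty open symmetric
subset of `G` with `O = K O K` and `O ⊆ U K` for an open subgroup `U` of `G`.  Then the
subgroup generated by `O` equals `V K` for some open subgroup `V` of `U`. -/
theorem subgroup_closure_eq_open_mul_coset {G : Type*} [Group G] [TopologicalSpace G]
    [IsTopologicalGroup G] (K : Subgroup G) (hK : IsClosed (K : Set G))
    (O : Set G) (hO : IsOpen O) (hne : O.Nonempty) (hsymm : O⁻¹ = O)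
    (hKOK : (K : Set G) * O * (K : Set G) = O)
    (U : Subgroup G) (hU : IsOpen (U : Set G)) (hOU : O ⊆ (U : Set G) * (K : Set G)) :
    ∃ V : Subgroup G, V ≤ U ∧ IsOpen (V : Set G) ∧
      (V : Set G) * (K : Set G) = (Subgroup.closure O : Set G) :=
  subgroup_closure_eq_open_mul_coset_general K O hO hne hsymm hKOK U hU hOU
end

section
/- Let H be a group acting by homeomorphisms on a Hausdorff topological space X, and let x, y ∈ X be such that the orbit closure cl(Hx) is compact and consists of distal points for the action. If cl(Hx) ∩ cl(Hy) is nonempty, then cl(Hy) = cl(Hx). In particular, H acts minimally on cl(Hx). -/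
open Topology Filter MulAction

set_option maxHeartbeats 1000000
set_option linter.unusedSectionVars false

attribute [local instance] Ultrafilter.mul Ultrafilter.semigroup

section Aux

variable {H X : Type*} [Group H] [TopologicalSpace X] [T2Space X] [MulAction H X]

/-- Iterated limit lemma: if `h • z → w` along `V` and `h • w → a` along `U`, then
`h • z → a` along the ultrafilter product `U * V`. -/
private lemma tendsto_smul_ultra_mul (hc : ∀ h : H, Continuous fun x : X => h • x)
    {U V : Ultrafilter H} {z w a : X}
    (hV : Tendsto (fun h : H => h • z) V (𝓝 w))
    (hU : Tendsto (fun h : H => h • w) U (𝓝 a)) :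
    Tendsto (fun h : H => h • z) (↑(U * V)) (𝓝 a) := by
  rw [tendsto_nhds]
  intro s hs ha
  refine (Ultrafilter.eventually_mul U V fun m => m • z ∈ s).mpr ?_
  filter_upwards [hU (hs.mem_nhds ha)] with g hg
  have hcont : Tendsto (fun h : H => g • (h • z)) V (𝓝 (g • w)) :=
    ((hc g).tendsto w).comp hV
  filter_upwards [hcont (hs.mem_nhds hg)] with h hh
  simpa [mul_smul] using hh

/-- The closure of an orbit is invariant. -/
private lemma smul_mem_closure_orbit (hc : ∀ h : H, Continuous fun x : X => h • x)
    (h : H) {b z : X} (hz : z ∈ closure (orbit H b)) :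
    h • z ∈ closure (orbit H b) := by
  refine map_mem_closure (hc h) hz ?_
  rintro _ ⟨g, rfl⟩
  exact ⟨h * g, mul_smul h g b⟩

/-- Existence of ultrafilter limits inside a compact invariant set. -/
private lemma exists_ultra_lim {K : Set X} (hcomp : IsCompact K)
    (hK : ∀ (h : H), ∀ z ∈ K, h • z ∈ K) {z : X} (hz : z ∈ K) (U : Ultrafilter H) :
    ∃ a ∈ K, Tendsto (fun h : H => h • z) U (𝓝 a) := by
  have hle : ↑(U.map fun h : H => h • z) ≤ 𝓟 K := by
    rw [le_principal_iff]
    exact Filter.mem_map.2 (Filter.univ_mem' fun h => hK h z hz)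
  obtain ⟨a, haK, ha⟩ := hcomp.ultrafilter_le_nhds _ hle
  exact ⟨a, haK, ha⟩

/-- A point in the closure of a range is an ultrafilter limit. -/
private lemma exists_ultrafilter_tendsto {α : Type*} {f : α → X} {a : X}
    (ha : a ∈ closure (Set.range f)) :
    ∃ U : Ultrafilter α, Tendsto f U (𝓝 a) := by
  have hne : (Filter.comap f (𝓝 a)).NeBot := by
    rw [comap_neBot_iff]
    intro t ht
    obtain ⟨b, hbt, c, rfl⟩ := mem_closure_iff_nhds.1 ha t ht
    exact ⟨c, hbt⟩
  exact ⟨Ultrafilter.of (Filter.comap f (𝓝 a)),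
    (Filter.map_mono (Ultrafilter.of_le _)).trans Filter.map_comap_le⟩

end Aux

/-- Let `H` act by homeomorphisms on a Hausdorff space `X`, and let `x, y ∈ X` be such that
the orbit closure of `x` is compact and consists of distal points.  If the orbit closures of
`x` and `y` meet, then they are equal; in particular `H` acts minimally on the orbit
closure of `x`.  (A point `z` is distal if for every `w ≠ z` there is no net `(h_i)` in `H`
with `h_i • z` and `h_i • w` converging to a common point; equivalently, no point `(v, v)`
of the diagonal lies in the closure of `{(h • z, h • w) : h ∈ H}`.) -/
theorem orbitClosure_eq_of_distal {H X : Type*} [Group H] [TopologicalSpace X] [T2Space X]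
    [MulAction H X] (hc : ∀ h : H, Continuous fun x : X => h • x) (x y : X)
    (hcomp : IsCompact (closure (MulAction.orbit H x)))
    (hdist : ∀ z ∈ closure (MulAction.orbit H x), ∀ w : X, w ≠ z →
      ¬ ∃ v : X, (v, v) ∈ closure {p : X × X | ∃ h : H, p = (h • z, h • w)})
    (hmeet : (closure (MulAction.orbit H x) ∩ closure (MulAction.orbit H y)).Nonempty) :
    closure (MulAction.orbit H y) = closure (MulAction.orbit H x) ∧
    ∀ z ∈ closure (MulAction.orbit H x),
      closure (MulAction.orbit H z) = closure (MulAction.orbit H x) := by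
  have hinv : ∀ (h : H), ∀ z ∈ closure (orbit H x), h • z ∈ closure (orbit H x) :=
    fun h z hz => smul_mem_closure_orbit hc h hz
  have hxK : x ∈ closure (orbit H x) := subset_closure (mem_orbit_self x)
  -- a general proximality step: if `h • z` tends to `w ∈ K` along some ultrafilter and
  -- `z`'s "target" is distal, we get an idempotent producing a proximal pair.
  have key : ∀ (z : X) (U : Ultrafilter H) (w : X), w ∈ closure (orbit H x) →
      Tendsto (fun h : H => h • z) U (𝓝 w) →
      ∃ a ∈ closure (orbit H x), ∃ q : Ultrafilter H,
        Tendsto (fun h : H => h • z) (↑q) (𝓝 a) ∧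
        Tendsto (fun h : H => h • a) (↑q) (𝓝 a) ∧
        ∃ p : Ultrafilter H, Tendsto (fun h : H => h • w) (↑p) (𝓝 a) := by
    intro z U w hwK hU
    -- get an idempotent in the compact left ideal `(Ultrafilter H) * U`
    obtain ⟨q, hqmem, hqq⟩ := exists_idempotent_in_compact_subsemigroup
      Ultrafilter.continuous_mul_left (Set.range fun p : Ultrafilter H => p * U)
      ⟨U * U, U, rfl⟩ (isCompact_range (Ultrafilter.continuous_mul_left U))
      (by rintro _ ⟨p, rfl⟩ _ ⟨p', rfl⟩; exact ⟨p * U * p', mul_assoc (p * U) p' U⟩)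
    obtain ⟨p, rfl⟩ := hqmem
    obtain ⟨a, haK, hpa⟩ := exists_ultra_lim hcomp hinv hwK p
    have hqz : Tendsto (fun h : H => h • z) (↑(p * U)) (𝓝 a) :=
      tendsto_smul_ultra_mul hc hU hpa
    obtain ⟨b, hbK, hqb⟩ := exists_ultra_lim hcomp hinv haK (p * U)
    have hqzb : Tendsto (fun h : H => h • z) (↑((p * U) * (p * U))) (𝓝 b) :=
      tendsto_smul_ultra_mul hc hqz hqb
    rw [hqq] at hqzb
    have hba : b = a := tendsto_nhds_unique hqzb hqz
    rw [hba] at hqb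
    exact ⟨a, haK, p * U, hqz, hqb, p, hpa⟩
  -- from the idempotent data, `z` is proximal to `a ∈ K`, hence `z = a` by distality
  have prox : ∀ (z : X) (a : X), a ∈ closure (orbit H x) →
      ∀ q : Ultrafilter H, Tendsto (fun h : H => h • z) (↑q) (𝓝 a) →
      Tendsto (fun h : H => h • a) (↑q) (𝓝 a) → z = a := by
    intro z a haK q hqz hqa
    by_contra hne
    refine hdist a haK z hne ⟨a, ?_⟩
    refine mem_closure_of_tendsto (hqa.prodMk_nhds hqz) ?_
    exact Filter.univ_mem' fun h => ⟨h, rfl⟩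
  have main : ∀ y' : X, (closure (orbit H x) ∩ closure (orbit H y')).Nonempty →
      closure (orbit H y') = closure (orbit H x) := by
    rintro y' ⟨w, hwK, hwy⟩
    -- Step 1 : `y' ∈ closure (orbit H x)`
    obtain ⟨U₁, hU₁⟩ := exists_ultrafilter_tendsto (f := fun h : H => h • y') hwy
    obtain ⟨a, haK, q, hqz, hqa, -⟩ := key y' U₁ w hwK hU₁
    have hy'K : y' ∈ closure (orbit H x) := by
      rw [prox y' a haK q hqz hqa]; exact haK
    -- Step 2 : `x ∈ closure (orbit H y')`
    obtain ⟨U₂, hU₂⟩ := exists_ultrafilter_tendsto (f := fun h : H => h • x) hy'K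
    obtain ⟨a₂, ha₂K, q₂, hq₂z, hq₂a, p₂, hp₂⟩ := key x U₂ y' hy'K hU₂
    have hxa₂ : x = a₂ := prox x a₂ ha₂K q₂ hq₂z hq₂a
    have hxy' : x ∈ closure (orbit H y') := by
      rw [hxa₂]
      exact mem_closure_of_tendsto hp₂ (Filter.univ_mem' fun h => mem_orbit y' h)
    -- conclude equality
    apply Set.Subset.antisymm
    · exact closure_minimal (by rintro _ ⟨g, rfl⟩; exact hinv g y' hy'K) isClosed_closure
    · refine closure_minimal ?_ isClosed_closure
      rintro _ ⟨g, rfl⟩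
      exact smul_mem_closure_orbit hc g hxy'
  exact ⟨main y hmeet, fun z hz => main z ⟨z, hz, subset_closure (mem_orbit_self z)⟩⟩
end

section
/- Let G be a group acting by homeomorphisms on a Hausdorff topological space X and let x ∈ X. Then the following are equivalent: (i) x is a fixed point of G and a distal point for the action; (ii) for every net (g_i) in G and every point y ≠ x, the net (g_i·y) does not converge to x; (iii) the intersection of all open G-invariant subsets of X containing x is exactly {x}. -/
open Topology Pointwise

universe u

/-- For a group `G` acting by homeomorphisms on a Hausdorff space `X` and `x ∈ X`,
the following are equivalent:
(i) `x` is a fixed point of `G` and a distal point of the action;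
(ii) for every net `(g_i)` in `G` and every `y ≠ x`, the net `(g_i • y)` does not
converge to `x`;
(iii) the intersection of all open `G`-invariant subsets of `X` containing `x`
is exactly `{x}`. -/
theorem distal_fixed_point_tfae {G : Type*} {X : Type u} [Group G] [TopologicalSpace X]
    [T2Space X] [MulAction G X] (hc : ∀ g : G, Continuous fun x : X => g • x) (x : X) :
    (((∀ g : G, g • x = x) ∧ ∀ y : X, y ≠ x →
        ¬ ∃ z : X, (z, z) ∈ closure {p : X × X | ∃ g : G, p = (g • x, g • y)}) ↔
      (∀ (ι : Type u) (l : Filter ι), l.NeBot → ∀ g : ι → G, ∀ y : X, y ≠ x →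
        ¬ Filter.Tendsto (fun i => g i • y) l (𝓝 x))) ∧
    ((∀ (ι : Type u) (l : Filter ι), l.NeBot → ∀ g : ι → G, ∀ y : X, y ≠ x →
        ¬ Filter.Tendsto (fun i => g i • y) l (𝓝 x)) ↔
      ⋂₀ {O : Set X | IsOpen O ∧ x ∈ O ∧ ∀ g : G, g • O = O} = {x}) := by
  classical
  haveI : ContinuousConstSMul G X := ⟨hc⟩
  constructor
  · constructor
    · rintro ⟨hfix, hdist⟩ ι l hl g y hy ht
      haveI := hl
      refine hdist y hy ⟨x, ?_⟩
      have h1 : (fun i => (g i • x, g i • y)) = fun i => (x, g i • y) := by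
        funext i; rw [hfix]
      have ht' : Filter.Tendsto (fun i => (g i • x, g i • y)) l (𝓝 (x, x)) := by
        rw [h1]
        exact tendsto_const_nhds.prodMk_nhds ht
      exact mem_closure_of_tendsto ht' (Filter.Eventually.of_forall fun i => ⟨g i, rfl⟩)
    · intro h2
      have hfix : ∀ g : G, g • x = x := by
        intro g
        by_contra hgx
        refine h2 X (𝓝 x) inferInstance (fun _ => g⁻¹) (g • x) hgx ?_
        simp only [inv_smul_smul]
        exact tendsto_const_nhds
      refine ⟨hfix, ?_⟩
      rintro y hy ⟨z, hz⟩
      set S : Set (X × X) := {p : X × X | ∃ g : G, p = (g • x, g • y)} with hS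
      set l : Filter (X × X) := 𝓝 (z, z) ⊓ Filter.principal S with hldef
      haveI hne : l.NeBot := mem_closure_iff_clusterPt.mp hz
      set gs : X × X → G :=
        fun p => if h : ∃ g : G, p = (g • x, g • y) then h.choose else 1 with hgs
      have hmem : ∀ p ∈ S, p = (gs p • x, gs p • y) := by
        intro p hp
        have h : ∃ g : G, p = (g • x, g • y) := hp
        simp only [hgs, dif_pos h]
        exact h.choose_spec
      have hSl : S ∈ l := Filter.mem_inf_of_right (Filter.mem_principal_self S)
      have hfst : Filter.Tendsto (fun p : X × X => p.1) l (𝓝 z) :=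
        Filter.Tendsto.mono_left (Continuous.tendsto continuous_fst (z, z)) inf_le_left
      have hsnd : Filter.Tendsto (fun p : X × X => p.2) l (𝓝 z) :=
        Filter.Tendsto.mono_left (Continuous.tendsto continuous_snd (z, z)) inf_le_left
      have hev1 : ∀ᶠ p in l, p.1 = x := by
        filter_upwards [hSl] with p hp
        exact (congrArg Prod.fst (hmem p hp)).trans (hfix _)
      have hzx : z = x := by
        have h3 : Filter.Tendsto (fun _ : X × X => x) l (𝓝 z) := hfst.congr' hev1
        exact tendsto_nhds_unique h3 tendsto_const_nhds
      have hev2 : ∀ᶠ p in l, p.2 = gs p • y := by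
        filter_upwards [hSl] with p hp
        exact congrArg Prod.snd (hmem p hp)
      have : Filter.Tendsto (fun p => gs p • y) l (𝓝 x) := by
        rw [← hzx]; exact hsnd.congr' hev2
      exact h2 (X × X) l hne gs y hy this
  · constructor
    · intro h2
      apply Set.eq_singleton_iff_unique_mem.mpr
      refine ⟨fun O hO => hO.2.1, ?_⟩
      intro y hy
      by_contra hyx
      have hcl : x ∈ closure (MulAction.orbit G y) := by
        by_contra hx
        have hOopen : IsOpen (closure (MulAction.orbit G y))ᶜ :=
          isOpen_compl_iff.mpr isClosed_closure
        have hinv : ∀ g : G,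
            g • (closure (MulAction.orbit G y))ᶜ = (closure (MulAction.orbit G y))ᶜ := by
          intro g
          rw [Set.smul_set_compl, ← closure_smul, MulAction.smul_orbit]
        exact hy _ ⟨hOopen, hx, hinv⟩ (subset_closure (MulAction.mem_orbit_self y))
      set l : Filter X := 𝓝 x ⊓ Filter.principal (MulAction.orbit G y) with hldef
      haveI hne : l.NeBot := mem_closure_iff_clusterPt.mp hcl
      set gs : X → G := fun p =>
        if h : p ∈ MulAction.orbit G y then (MulAction.mem_orbit_iff.mp h).choose else 1 with hgs
      have hev : ∀ᶠ p in l, p = gs p • y := by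
        filter_upwards [Filter.mem_inf_of_right
          (Filter.mem_principal_self (MulAction.orbit G y))] with p hp
        simp only [hgs]
        rw [dif_pos hp]
        exact ((MulAction.mem_orbit_iff.mp hp).choose_spec).symm
      have hid : Filter.Tendsto (fun p : X => p) l (𝓝 x) :=
        Filter.Tendsto.mono_left Filter.tendsto_id inf_le_left
      exact h2 X l hne gs y hyx (hid.congr' hev)
    · intro h3 ι l hl g y hy ht
      haveI := hl
      have hyI : y ∈ ⋂₀ {O : Set X | IsOpen O ∧ x ∈ O ∧ ∀ g : G, g • O = O} := by
        rintro O ⟨hOo, hxO, hinv⟩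
        have hev : ∀ᶠ i in l, g i • y ∈ O := ht (hOo.mem_nhds hxO)
        obtain ⟨i, hi⟩ := hev.exists
        have : g i • y ∈ g i • O := by rw [hinv]; exact hi
        exact Set.smul_mem_smul_set_iff.mp this
      rw [h3] at hyI
      exact hy hyI
end

section
/- Let G be a topological group and let H be a closed subgroup. Then the following are equivalent: (i) the translation action of G on the coset space G/H is distal; (ii) the trivial coset H is a distal point for the translation action of H on G/H; (iii) H = ⋂_{U ∈ 𝒰} HUH, where 𝒰 is a base of identity neighbourhoods in G. -/
open Topology Pointwise

/-!
Both kinds of proximality are governed by the double cosets `H U H`. If `(xH, yH)` is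
proximal under `G`, with common limit `wH`, then `g x ∈ w u₁ H` and `g y ∈ w u₂ H` for some `g`
and `u₁, u₂` near `1`, so `x⁻¹ y ∈ H u₁⁻¹ u₂ H`; hence `x⁻¹ y` lies in every `H U H`.
Conversely, if `y = h₁ u h₂`, then the translation by `h₁⁻¹ ∈ H` moves `(H, yH)` to `(H, uH)`,
so `y` lying in every `H U H` makes `(H, yH)` proximal under `H`, with `H` itself as the common
limit. Thus each of (i), (ii), (iii) says that `⋂_U H U H ⊆ H`.
-/

namespace QuotientGroup

variable {G : Type*} [Group G] {H : Subgroup G}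

theorem mk_eq_mk_one_iff {g : G} : (g : G ⧸ H) = ((1 : G) : G ⧸ H) ↔ g ∈ H := by
  rw [QuotientGroup.eq, mul_one, inv_mem_iff]

variable [TopologicalSpace G]

theorem diag_mem_closure_of_forall_mem_mul_mul {y : G}
    (hy : ∀ U ∈ 𝓝 (1 : G), y ∈ (H : Set G) * U * H) :
    ((↑(1 : G), ↑(1 : G)) : (G ⧸ H) × (G ⧸ H)) ∈
      closure {p | ∃ h ∈ H, p = (↑(h * 1), ↑(h * y))} := by
  refine mem_closure_iff_nhds.mpr fun t ht => ?_
  obtain ⟨W₁, hW₁, W₂, hW₂, hWt⟩ := mem_nhds_prod_iff.mp ht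
  obtain ⟨_, ⟨h₁, hh₁, u, hu, rfl⟩, h₂, hh₂, rfl⟩ :=
    hy _ (continuous_mk.continuousAt.preimage_mem_nhds hW₂)
  refine ⟨_, hWt ⟨?_, ?_⟩, h₁⁻¹, H.inv_mem hh₁, rfl⟩
  · rw [mul_one, mk_eq_mk_one_iff.mpr (H.inv_mem hh₁)]
    exact mem_of_mem_nhds hW₁
  · rwa [show h₁⁻¹ * (h₁ * u * h₂) = u * h₂ by group, mk_mul_of_mem u hh₂]

variable [IsTopologicalGroup G]

theorem inv_mul_mem_mul_mul_of_diag_mem_closure {x y : G} {z : G ⧸ H}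
    (hz : (z, z) ∈ closure {p : (G ⧸ H) × (G ⧸ H) | ∃ g : G, p = (↑(g * x), ↑(g * y))})
    {V : Set G} (hV : V ∈ 𝓝 1) : x⁻¹ * y ∈ (H : Set G) * V * H := by
  obtain ⟨w, rfl⟩ := mk_surjective z
  obtain ⟨U, hU, hUV⟩ := exists_nhds_split_inv hV
  have hW : (fun u => (↑(w * u) : G ⧸ H)) '' U⁻¹ ∈ 𝓝 (w : G ⧸ H) := by
    simpa using (isOpenMap_coe.comp (Homeomorph.mulLeft w).isOpenMap).image_mem_nhds
      (inv_mem_nhds_one G hU)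
  obtain ⟨_, ⟨⟨u₁, hu₁, hx⟩, ⟨u₂, hu₂, hy⟩⟩, g, rfl⟩ :=
    mem_closure_iff_nhds.mp hz _ (prod_mem_nhds hW hW)
  have hmid : u₁⁻¹ * u₂ ∈ V := by simpa using hUV u₁⁻¹ hu₁ u₂⁻¹ hu₂
  have hx' := H.inv_mem (QuotientGroup.eq.mp hx)
  convert Set.mul_mem_mul (Set.mul_mem_mul hx' hmid) (QuotientGroup.eq.mp hy) using 1
  group

end QuotientGroup

theorem codistal_tfae_general {G : Type*} [Group G] [TopologicalSpace G] [IsTopologicalGroup G]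
    (H : Subgroup G) :
    ((∀ x y : G, (QuotientGroup.mk x : G ⧸ H) ≠ QuotientGroup.mk y →
        ¬ ∃ z : G ⧸ H, (z, z) ∈ closure {p : (G ⧸ H) × (G ⧸ H) |
          ∃ g : G, p = (QuotientGroup.mk (g * x), QuotientGroup.mk (g * y))}) ↔
      (∀ y : G, (QuotientGroup.mk y : G ⧸ H) ≠ QuotientGroup.mk (1 : G) →
        ¬ ∃ z : G ⧸ H, (z, z) ∈ closure {p : (G ⧸ H) × (G ⧸ H) |
          ∃ h ∈ H, p = (QuotientGroup.mk (h * 1), QuotientGroup.mk (h * y))})) ∧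
    ((∀ y : G, (QuotientGroup.mk y : G ⧸ H) ≠ QuotientGroup.mk (1 : G) →
        ¬ ∃ z : G ⧸ H, (z, z) ∈ closure {p : (G ⧸ H) × (G ⧸ H) |
          ∃ h ∈ H, p = (QuotientGroup.mk (h * 1), QuotientGroup.mk (h * y))}) ↔
      (H : Set G) = ⋂ U ∈ 𝓝 (1 : G), (H : Set G) * U * (H : Set G)) := open QuotientGroup in by
  have proximal_under_G {y : G} ⦃z : G ⧸ H⦄ (hz : (z, z) ∈ closure
      {p : (G ⧸ H) × (G ⧸ H) | ∃ h ∈ H, p = (↑(h * 1), ↑(h * y))}) :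
      (z, z) ∈ closure {p : (G ⧸ H) × (G ⧸ H) | ∃ g : G, p = (↑(g * 1), ↑(g * y))} :=
    closure_mono (by rintro _ ⟨h, -, rfl⟩; exact ⟨h, rfl⟩) hz
  refine ⟨⟨fun hi y hy ⟨z, hz⟩ => hi 1 y hy.symm ⟨z, proximal_under_G hz⟩,
    fun hii x y hxy ⟨z, hz⟩ => ?_⟩, ⟨fun hii => ?_, fun hiii y hy ⟨z, hz⟩ => ?_⟩⟩
  · by_cases hxy' : x⁻¹ * y ∈ H
    · exact hxy (QuotientGroup.eq.mpr hxy')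
    · exact hii _ (mt mk_eq_mk_one_iff.mp hxy') ⟨_, diag_mem_closure_of_forall_mem_mul_mul
        fun U hU => inv_mul_mem_mul_mul_of_diag_mem_closure hz hU⟩
  · refine subset_antisymm (Set.subset_iInter₂ fun U hU => ?_) fun g hg => ?_
    · exact (Set.subset_mul_left _ (mem_of_mem_nhds hU)).trans (Set.subset_mul_left _ H.one_mem)
    · by_contra hgH
      exact hii g (mt mk_eq_mk_one_iff.mp hgH)
        ⟨_, diag_mem_closure_of_forall_mem_mul_mul (Set.mem_iInter₂.mp hg)⟩
  · have hyH : y ∈ (H : Set G) := hiii ▸ Set.mem_iInter₂.mpr fun U hU => by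
      simpa using inv_mul_mem_mul_mul_of_diag_mem_closure (proximal_under_G hz) hU
    exact hy (mk_eq_mk_one_iff.mpr hyH)

/-- (Keynes) Let `G` be a topological group and `H` a closed subgroup.  The following are
equivalent: (i) the left translation action of `G` on `G/H` is distal; (ii) the trivial
coset is a distal point of the translation action of `H` on `G/H`; (iii)
`H = ⋂_U H U H` where `U` ranges over the identity neighbourhoods of `G`.
Proximality of a pair of cosets under a set of translations is expressed via closures:
a pair is proximal iff some diagonal point lies in the closure of its orbit set. -/
theorem codistal_tfae {G : Type*} [Group G] [TopologicalSpace G] [IsTopologicalGroup G]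
    (H : Subgroup G) (hH : IsClosed (H : Set G)) :
    ((∀ x y : G, (QuotientGroup.mk x : G ⧸ H) ≠ QuotientGroup.mk y →
        ¬ ∃ z : G ⧸ H, (z, z) ∈ closure {p : (G ⧸ H) × (G ⧸ H) |
          ∃ g : G, p = (QuotientGroup.mk (g * x), QuotientGroup.mk (g * y))}) ↔
      (∀ y : G, (QuotientGroup.mk y : G ⧸ H) ≠ QuotientGroup.mk (1 : G) →
        ¬ ∃ z : G ⧸ H, (z, z) ∈ closure {p : (G ⧸ H) × (G ⧸ H) |
          ∃ h ∈ H, p = (QuotientGroup.mk (h * 1), QuotientGroup.mk (h * y))})) ∧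
    ((∀ y : G, (QuotientGroup.mk y : G ⧸ H) ≠ QuotientGroup.mk (1 : G) →
        ¬ ∃ z : G ⧸ H, (z, z) ∈ closure {p : (G ⧸ H) × (G ⧸ H) |
          ∃ h ∈ H, p = (QuotientGroup.mk (h * 1), QuotientGroup.mk (h * y))}) ↔
      (H : Set G) = ⋂ U ∈ 𝓝 (1 : G), (H : Set G) * U * (H : Set G)) :=
  codistal_tfae_general H
end

section
/- Let G be a topological group and let K be a closed commensurated subgroup of G (i.e. for every g ∈ G, K ∩ gKg⁻¹ has finite index in both K and gKg⁻¹). Then K is codistal in G: the left translation action of G on G/K is distal. -/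
/-!
Write `s = x⁻¹ y`. The set of pairs of cosets `(aK, bK)` with `a⁻¹ b ∈ K s K` is well defined
and invariant under `G`, so it contains the closure of the `G`-orbit of `(xK, yK)`. Since `K s K`
is the preimage in `G` of the `K`-orbit of `sK`, and this orbit is finite by commensuration, `K s K`
is closed and so is that set of pairs. A diagonal point `(zK, zK)` in it would give `1 ∈ K s K`,
i.e. `s ∈ K`, i.e. `xK = yK`.
-/

open DoubleCoset

section DoubleCoset

variable {G : Type*} [Group G]

lemma mem_iff_of_mem_doubleCoset {K : Subgroup G} {a b : G} (hb : b ∈ doubleCoset a K K) :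
    b ∈ K ↔ a ∈ K := by
  obtain ⟨k₁, hk₁, k₂, hk₂, rfl⟩ := mem_doubleCoset.1 hb
  refine ⟨fun h => ?_, fun h => K.mul_mem (K.mul_mem hk₁ h) hk₂⟩
  simpa [mul_assoc] using K.mul_mem (K.mul_mem (K.inv_mem hk₁) h) (K.inv_mem hk₂)

lemma mul_mem_doubleCoset {K : Subgroup G} {a b k₁ k₂ : G} (hk₁ : k₁ ∈ K) (hk₂ : k₂ ∈ K)
    (hb : b ∈ doubleCoset a K K) : k₁ * b * k₂ ∈ doubleCoset a K K := by
  obtain ⟨l₁, hl₁, l₂, hl₂, rfl⟩ := mem_doubleCoset.1 hb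
  exact mem_doubleCoset.2 ⟨k₁ * l₁, K.mul_mem hk₁ hl₁, l₂ * k₂, K.mul_mem hl₂ hk₂, by group⟩

lemma subgroup_smul_coe_quotient (K H : Subgroup G) (k : K) (g : G) :
    k • (g : G ⧸ H) = ((k * g : G) : G ⧸ H) :=
  rfl

lemma preimage_mk_orbit_eq_doubleCoset (K : Subgroup G) (s : G) :
    QuotientGroup.mk ⁻¹' MulAction.orbit K (s : G ⧸ K) = doubleCoset s K K := by
  ext g
  simp only [Set.mem_preimage, MulAction.mem_orbit_iff, subgroup_smul_coe_quotient,
    Subtype.exists, mem_doubleCoset, QuotientGroup.eq]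
  constructor
  · rintro ⟨k, hk, hks⟩
    exact ⟨k, hk, (k * s)⁻¹ * g, hks, by group⟩
  · rintro ⟨k₁, hk₁, k₂, hk₂, rfl⟩
    exact ⟨k₁, hk₁, by simpa [mul_assoc] using hk₂⟩

lemma stabilizer_mk_eq_subgroupOf_map_conj (K : Subgroup G) (s : G) :
    MulAction.stabilizer K (s : G ⧸ K) = (K.map (MulAut.conj s).toMonoidHom).subgroupOf K := by
  ext ⟨k, hk⟩
  simp only [Subgroup.mem_subgroupOf, MulAction.mem_stabilizer_iff, subgroup_smul_coe_quotient,
    QuotientGroup.eq, Subgroup.mem_map, MulEquiv.coe_toMonoidHom, MulAut.conj_apply]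
  constructor
  · intro h
    exact ⟨s⁻¹ * k * s, by simpa [mul_assoc] using K.inv_mem h, by group⟩
  · rintro ⟨x, hx, rfl⟩
    simpa [mul_assoc] using K.inv_mem hx

lemma finite_orbit_mk_of_relIndex_ne_zero {K : Subgroup G} {s : G}
    (h : (K.map (MulAut.conj s).toMonoidHom).relIndex K ≠ 0) :
    (MulAction.orbit K (s : G ⧸ K)).Finite := by
  apply Set.finite_of_ncard_ne_zero
  rwa [← MulAction.index_stabilizer, stabilizer_mk_eq_subgroupOf_map_conj]

end DoubleCoset

section Topology

variable {G : Type*} [Group G] [TopologicalSpace G] [IsTopologicalGroup G] {K : Subgroup G}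

lemma isClosed_doubleCoset_of_relIndex_ne_zero (hK : IsClosed (K : Set G)) {s : G}
    (h : (K.map (MulAut.conj s).toMonoidHom).relIndex K ≠ 0) :
    IsClosed (doubleCoset s K K) := by
  have : T1Space (G ⧸ K) := QuotientGroup.t1Space_iff.2 hK
  rw [← preimage_mk_orbit_eq_doubleCoset]
  exact (finite_orbit_mk_of_relIndex_ne_zero h).isClosed.preimage QuotientGroup.continuous_mk

lemma isClosed_image_prodMap_mk_inv_mul_mem {D : Set G} (hD : IsClosed D)
    (hKD : ∀ k₁ ∈ K, ∀ k₂ ∈ K, ∀ d ∈ D, k₁ * d * k₂ ∈ D) :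
    IsClosed (Prod.map (QuotientGroup.mk : G → G ⧸ K) (QuotientGroup.mk : G → G ⧸ K) ''
      {q : G × G | q.1⁻¹ * q.2 ∈ D}) := by
  have hq := (QuotientGroup.isOpenQuotientMap_mk (N := K)).prodMap
    (QuotientGroup.isOpenQuotientMap_mk (N := K))
  rw [← hq.isQuotientMap.isClosed_preimage]
  convert hD.preimage (continuous_fst.inv.mul continuous_snd) using 1
  ext ⟨a, b⟩
  simp only [Set.mem_preimage, Set.mem_image, Prod.exists, Prod.map, Prod.mk.injEq,
    QuotientGroup.eq, Set.mem_ofPred_eq]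
  constructor
  · rintro ⟨a', b', hD', ha, hb⟩
    simpa [mul_assoc] using hKD _ (K.inv_mem ha) _ hb _ hD'
  · exact fun h => ⟨a, b, h, by simp, by simp⟩

end Topology

/-- A closed commensurated subgroup of a topological group is codistal: the left
translation action of `G` on `G/K` is distal. -/
theorem codistal_of_commensurated {G : Type*} [Group G] [TopologicalSpace G]
    [IsTopologicalGroup G] (K : Subgroup G) (hK : IsClosed (K : Set G))
    (hcomm : ∀ g : G,
      (K.map (MulAut.conj g).toMonoidHom).relIndex K ≠ 0 ∧
      K.relIndex (K.map (MulAut.conj g).toMonoidHom) ≠ 0) :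
    ∀ x y : G, (QuotientGroup.mk x : G ⧸ K) ≠ QuotientGroup.mk y →
      ¬ ∃ z : G ⧸ K, (z, z) ∈ closure {p : (G ⧸ K) × (G ⧸ K) |
        ∃ g : G, p = (QuotientGroup.mk (g * x), QuotientGroup.mk (g * y))} := by
  rintro x y hxy ⟨z, hz⟩
  set P := Prod.map (QuotientGroup.mk : G → G ⧸ K) (QuotientGroup.mk : G → G ⧸ K) ''
    {q : G × G | q.1⁻¹ * q.2 ∈ doubleCoset (x⁻¹ * y) K K}
  have hP : IsClosed P := isClosed_image_prodMap_mk_inv_mul_mem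
    (isClosed_doubleCoset_of_relIndex_ne_zero hK (hcomm _).1)
    fun _ hk₁ _ hk₂ _ => mul_mem_doubleCoset hk₁ hk₂
  have horbit : {p : (G ⧸ K) × (G ⧸ K) |
      ∃ g : G, p = (QuotientGroup.mk (g * x), QuotientGroup.mk (g * y))} ⊆ P := by
    rintro _ ⟨g, rfl⟩
    exact ⟨(g * x, g * y), by simpa [mul_assoc] using mem_doubleCoset_self K K (x⁻¹ * y), rfl⟩
  obtain ⟨⟨a, b⟩, hab, hzz⟩ := hP.closure_subset_iff.2 horbit hz
  obtain ⟨ha, hb⟩ := Prod.ext_iff.1 hzz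
  have hab_mem : a⁻¹ * b ∈ K := QuotientGroup.eq.1 (ha.trans hb.symm)
  exact hxy (QuotientGroup.eq.2 ((mem_iff_of_mem_doubleCoset hab).1 hab_mem))
end

section
/- Let G be a topological group and let K ≤ H ≤ G be closed subgroups such that the translation action of G on G/H is distal and the translation action of H on H/K is distal. Then the translation action of G on G/K is distal. -/
/-!
If `xK` and `yK` are proximal in `G/K`, their images `xH`, `yH` are proximal in `G/H`, so
`y = x h₀` with `h₀ ∈ H \ K`. If `g x K` and `g y K` both lie near `z₀ K`, write
`g x = a k₁` and `g y = b k₂` with `a, b` near `z₀` and `k₁, k₂ ∈ K`; then `k₁ ∈ H` moves the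
pair `(h₀ K, K)` of `H/K` to `(a⁻¹ b K, K)`, and `a⁻¹ b ∈ H` is near `1`. Hence `h₀ K` and `K`
are proximal in `H/K`.
-/

open Topology Filter Set

section

variable {G : Type*} [Group G]

def Subgroup.orbitPairs (L : Subgroup G) (x y : G) : Set ((G ⧸ L) × (G ⧸ L)) :=
  {p | ∃ g : G, p = (QuotientGroup.mk (g * x), QuotientGroup.mk (g * y))}

variable [TopologicalSpace G]

def IsProximalPair (L : Subgroup G) (x y : G) : Prop :=
  ∃ z : G ⧸ L, (z, z) ∈ closure (L.orbitPairs x y)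

theorem Subgroup.continuous_quotientMapOfLE {L M : Subgroup G} (hLM : L ≤ M) :
    Continuous (Subgroup.quotientMapOfLE hLM) :=
  (QuotientGroup.isQuotientMap_mk L).continuous_iff.2 QuotientGroup.continuous_mk

theorem IsProximalPair.of_le {L M : Subgroup G} (hLM : L ≤ M) {x y : G}
    (hxy : IsProximalPair L x y) : IsProximalPair M x y := by
  obtain ⟨z, hz⟩ := hxy
  have hp := Subgroup.continuous_quotientMapOfLE hLM
  refine ⟨Subgroup.quotientMapOfLE hLM z, closure_mono ?_ <|
    image_closure_subset_closure_image (hp.prodMap hp) ⟨(z, z), hz, rfl⟩⟩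
  rintro _ ⟨_, ⟨g, rfl⟩, rfl⟩
  exact ⟨g, rfl⟩

theorem exists_nhds_one_forall_mk_mem {K H : Subgroup G} {u : Set (H ⧸ K.subgroupOf H)}
    (hu : u ∈ 𝓝 (QuotientGroup.mk 1)) :
    ∃ V ∈ 𝓝 (1 : G), ∀ h : H, (h : G) ∈ V → (QuotientGroup.mk h : H ⧸ K.subgroupOf H) ∈ u := by
  have := QuotientGroup.continuous_mk.continuousAt hu
  rw [nhds_subtype, mem_map, mem_comap] at this
  exact this

theorem IsProximalPair.subgroupOf [IsTopologicalGroup G] {K H : Subgroup G} (hKH : K ≤ H)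
    {x : G} {h₀ : H}
    (hprox : IsProximalPair K x (x * h₀)) : IsProximalPair (K.subgroupOf H) h₀ 1 := by
  obtain ⟨z, hz⟩ := hprox
  obtain ⟨z₀, rfl⟩ := QuotientGroup.mk_surjective z
  refine ⟨QuotientGroup.mk 1, mem_closure_iff_nhds.2 fun t ht => ?_⟩
  obtain ⟨u, hu, v, hv, huv⟩ := mem_nhds_prod_iff.1 ht
  obtain ⟨V, hV, hVu⟩ := exists_nhds_one_forall_mk_mem hu
  have hnear : {q : G × G | q.1⁻¹ * q.2 ∈ V} ∈ 𝓝 (z₀, z₀) :=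
    (continuous_fst.inv.mul continuous_snd).continuousAt.preimage_mem_nhds (by simpa using hV)
  obtain ⟨A, hA, B, hB, hAB⟩ := mem_nhds_prod_iff.1 hnear
  obtain ⟨_, ⟨⟨a, haA, hag⟩, ⟨b, hbB, hbg⟩⟩, g, rfl⟩ := mem_closure_iff_nhds.1 hz _
    (prod_mem_nhds (QuotientGroup.isOpenMap_coe.image_mem_nhds hA)
      (QuotientGroup.isOpenMap_coe.image_mem_nhds hB))
  have hk₁ : a⁻¹ * (g * x) ∈ K := QuotientGroup.eq.1 hag
  have hk₂ : b⁻¹ * (g * (x * h₀)) ∈ K := QuotientGroup.eq.1 hbg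
  have hab : a⁻¹ * b ∈ H := by
    have : a⁻¹ * b = a⁻¹ * (g * x) * h₀ * (b⁻¹ * (g * (x * h₀)))⁻¹ := by group
    rw [this]
    exact H.mul_mem (H.mul_mem (hKH hk₁) h₀.2) (H.inv_mem (hKH hk₂))
  let k₁ : H := ⟨a⁻¹ * (g * x), hKH hk₁⟩
  refine ⟨_, huv ⟨?_, ?_⟩, k₁, rfl⟩
  · have : (QuotientGroup.mk (k₁ * h₀) : H ⧸ K.subgroupOf H) = QuotientGroup.mk ⟨_, hab⟩ := by
      rw [QuotientGroup.eq, Subgroup.mem_subgroupOf]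
      convert K.inv_mem hk₂ using 1
      push_cast [k₁]
      group
    exact this ▸ hVu ⟨_, hab⟩ (@hAB (a, b) ⟨haA, hbB⟩)
  · have : (QuotientGroup.mk (k₁ * 1) : H ⧸ K.subgroupOf H) = QuotientGroup.mk 1 := by
      rw [QuotientGroup.eq, Subgroup.mem_subgroupOf]
      convert K.inv_mem hk₁ using 1
      push_cast [k₁]
      group
    exact this ▸ mem_of_mem_nhds hv

end

theorem codistal_trans_general {G : Type*} [Group G] [TopologicalSpace G] [IsTopologicalGroup G]
    (K H : Subgroup G) (hKH : K ≤ H)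
    (hGH : ∀ x y : G, (QuotientGroup.mk x : G ⧸ H) ≠ QuotientGroup.mk y →
      ¬ ∃ z : G ⧸ H, (z, z) ∈ closure {p : (G ⧸ H) × (G ⧸ H) |
        ∃ g : G, p = (QuotientGroup.mk (g * x), QuotientGroup.mk (g * y))})
    (hHK : ∀ a b : H, (QuotientGroup.mk a : H ⧸ K.subgroupOf H) ≠ QuotientGroup.mk b →
      ¬ ∃ z : H ⧸ K.subgroupOf H, (z, z) ∈ closure
        {p : (H ⧸ K.subgroupOf H) × (H ⧸ K.subgroupOf H) |
          ∃ h : H, p = (QuotientGroup.mk (h * a), QuotientGroup.mk (h * b))}) :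
    ∀ x y : G, (QuotientGroup.mk x : G ⧸ K) ≠ QuotientGroup.mk y →
      ¬ ∃ z : G ⧸ K, (z, z) ∈ closure {p : (G ⧸ K) × (G ⧸ K) |
        ∃ g : G, p = (QuotientGroup.mk (g * x), QuotientGroup.mk (g * y))} := by
  intro x y hxy hprox
  have hxyH : (QuotientGroup.mk x : G ⧸ H) = QuotientGroup.mk y :=
    not_not.1 fun hne => hGH x y hne (IsProximalPair.of_le hKH hprox)
  obtain ⟨h₀, rfl⟩ : ∃ h₀ : H, y = x * h₀ := ⟨⟨x⁻¹ * y, QuotientGroup.eq.1 hxyH⟩, by simp⟩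
  refine hHK h₀ 1 (fun heq => hxy ?_) (IsProximalPair.subgroupOf hKH hprox)
  rw [QuotientGroup.eq, Subgroup.mem_subgroupOf] at heq
  rw [QuotientGroup.eq]
  simpa using heq

/-- Codistality is transitive: if `K ≤ H ≤ G` are closed subgroups with `G` acting distally
on `G/H` and `H` acting distally on `H/K` (by left translation), then `G` acts distally on
`G/K`. -/
theorem codistal_trans {G : Type*} [Group G] [TopologicalSpace G] [IsTopologicalGroup G]
    (K H : Subgroup G) (hKH : K ≤ H)
    (hKc : IsClosed (K : Set G)) (hHc : IsClosed (H : Set G))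
    (hGH : ∀ x y : G, (QuotientGroup.mk x : G ⧸ H) ≠ QuotientGroup.mk y →
      ¬ ∃ z : G ⧸ H, (z, z) ∈ closure {p : (G ⧸ H) × (G ⧸ H) |
        ∃ g : G, p = (QuotientGroup.mk (g * x), QuotientGroup.mk (g * y))})
    (hHK : ∀ a b : H, (QuotientGroup.mk a : H ⧸ K.subgroupOf H) ≠ QuotientGroup.mk b →
      ¬ ∃ z : H ⧸ K.subgroupOf H, (z, z) ∈ closure
        {p : (H ⧸ K.subgroupOf H) × (H ⧸ K.subgroupOf H) |
          ∃ h : H, p = (QuotientGroup.mk (h * a), QuotientGroup.mk (h * b))}) :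
    ∀ x y : G, (QuotientGroup.mk x : G ⧸ K) ≠ QuotientGroup.mk y →
      ¬ ∃ z : G ⧸ K, (z, z) ∈ closure {p : (G ⧸ K) × (G ⧸ K) |
        ∃ g : G, p = (QuotientGroup.mk (g * x), QuotientGroup.mk (g * y))} :=
  codistal_trans_general K H hKH hGH hHK
end

section
/- Let G be a topological group and let ℋ be a family of closed subgroups of G, each codistal in G. Then the intersection H = ⋂_{K ∈ ℋ} K is codistal in G. -/
/-!
Distinct cosets of `⋂ ℋ` lie in distinct cosets of some `K ∈ ℋ`, and the continuous
projection `G/⋂ ℋ → G/K` commutes with translations, so a proximal pair in `G/⋂ ℋ` would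
project to a proximal pair in `G/K`.
-/

open Topology

/-- A subgroup `K` of a topological group `G` is codistal if the left translation action of
`G` on `G/K` is distal: no pair of distinct cosets is proximal. -/
def Codistal {G : Type*} [Group G] [TopologicalSpace G] (K : Subgroup G) : Prop :=
  ∀ x y : G, (QuotientGroup.mk x : G ⧸ K) ≠ QuotientGroup.mk y →
    ¬ ∃ z : G ⧸ K, (z, z) ∈ closure {p : (G ⧸ K) × (G ⧸ K) |
      ∃ g : G, p = (QuotientGroup.mk (g * x), QuotientGroup.mk (g * y))}

section

variable {G : Type*} [Group G] [TopologicalSpace G] {H K : Subgroup G}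

theorem Subgroup.continuous_quotientMapOfLE_s13 (h : H ≤ K) :
    Continuous (Subgroup.quotientMapOfLE h) :=
  (QuotientGroup.isQuotientMap_mk H).continuous_iff.mpr continuous_quot_mk

theorem quotientMapOfLE_mem_closure_translates (h : H ≤ K) {x y : G} {z : G ⧸ H}
    (hz : (z, z) ∈ closure {p : (G ⧸ H) × (G ⧸ H) |
      ∃ g : G, p = (QuotientGroup.mk (g * x), QuotientGroup.mk (g * y))}) :
    (Subgroup.quotientMapOfLE h z, Subgroup.quotientMapOfLE h z) ∈
      closure {p : (G ⧸ K) × (G ⧸ K) |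
        ∃ g : G, p = (QuotientGroup.mk (g * x), QuotientGroup.mk (g * y))} := by
  have hcont := (Subgroup.continuous_quotientMapOfLE_s13 h).prodMap
    (Subgroup.continuous_quotientMapOfLE_s13 h)
  refine closure_mono ?_ (image_closure_subset_closure_image hcont ⟨_, hz, rfl⟩)
  rintro _ ⟨_, ⟨g, rfl⟩, rfl⟩
  exact ⟨g, rfl⟩

theorem Codistal.of_forall_exists_le
    (hsep : ∀ x y : G, (QuotientGroup.mk x : G ⧸ H) ≠ QuotientGroup.mk y →
      ∃ K, H ≤ K ∧ Codistal K ∧ (QuotientGroup.mk x : G ⧸ K) ≠ QuotientGroup.mk y) :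
    Codistal H := by
  rintro x y hxy ⟨z, hz⟩
  obtain ⟨K, hle, hK, hxyK⟩ := hsep x y hxy
  exact hK x y hxyK ⟨_, quotientMapOfLE_mem_closure_translates hle hz⟩

end

theorem codistal_sInf_general {G : Type*} [Group G] [TopologicalSpace G]
    (ℋ : Set (Subgroup G))
    (hcd : ∀ K ∈ ℋ, Codistal K) : Codistal (sInf ℋ) := by
  refine Codistal.of_forall_exists_le fun x y hxy => ?_
  have hnot_mem : x⁻¹ * y ∉ sInf ℋ := fun h => hxy (QuotientGroup.eq.mpr h)
  obtain ⟨K, hK, hxyK⟩ : ∃ K ∈ ℋ, x⁻¹ * y ∉ K := by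
    simpa [Subgroup.mem_sInf] using hnot_mem
  exact ⟨K, sInf_le hK, hcd K hK, fun h => hxyK (QuotientGroup.eq.mp h)⟩

/-- The intersection of any family of closed codistal subgroups of a topological group is
codistal. -/
theorem codistal_sInf {G : Type*} [Group G] [TopologicalSpace G] [IsTopologicalGroup G]
    (ℋ : Set (Subgroup G)) (hclosed : ∀ K ∈ ℋ, IsClosed (K : Set G))
    (hcd : ∀ K ∈ ℋ, Codistal K) : Codistal (sInf ℋ) :=
  codistal_sInf_general ℋ hcd
end

section
/- Let G be a topological group and let K ≤ H ≤ G be closed subgroups such that K is cocompact in H (the coset space H/K is compact) and K is codistal in G, and assume G has a compact open subgroup. Then H is codistal in G. -/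
/-
If `xH` and `yH` are proximal, an ultrafilter on `G` witnesses this; local compactness and the
compactness of `H/K` let it converge already in `G ⧸ K`, which puts a point of `H/K` into the
closure of the `K`-orbit of `x⁻¹yK`. Since `K` acts distally on `G ⧸ K` and `H/K` is compact and
`K`-invariant, an idempotent of the Ellis semigroup shows that `x⁻¹yK` itself lies in `H/K`,
that is `xH = yH`.
-/

open Topology

open Filter Set Pointwise

theorem mem_closure_range_iff_exists_ultrafilter {α X : Type*} [TopologicalSpace X]
    {F : α → X} {x : X} :
    x ∈ closure (range F) ↔ ∃ 𝒰 : Ultrafilter α, Tendsto F 𝒰 (𝓝 x) := by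
  refine ⟨fun h => ?_, fun ⟨𝒰, h𝒰⟩ => mem_closure_of_tendsto h𝒰 (.of_forall mem_range_self)⟩
  have : (comap F (𝓝 x)).NeBot := comap_neBot_iff_frequently.2 (mem_closure_iff_frequently.1 h)
  exact ⟨Ultrafilter.of _, tendsto_comap.mono_left (Ultrafilter.of_le _)⟩

attribute [local instance] Ultrafilter.mul

theorem Ultrafilter.tendsto_mul_of_tendsto {M X : Type*} [Mul M] [TopologicalSpace X]
    {𝒰 𝒱 : Ultrafilter M} {F ℓ : M → X} {x : X}
    (h𝒱 : ∀ i, Tendsto (fun j => F (i * j)) 𝒱 (𝓝 (ℓ i))) (h𝒰 : Tendsto ℓ 𝒰 (𝓝 x)) :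
    Tendsto F ↑(𝒰 * 𝒱) (𝓝 x) := by
  refine (nhds_basis_opens x).tendsto_right_iff.2 fun s ⟨hxs, hs⟩ => ?_
  rw [Ultrafilter.eventually_mul]
  filter_upwards [h𝒰 (hs.mem_nhds hxs)] with i hi using h𝒱 i (hs.mem_nhds hi)

def IsProximal (M : Type*) {X : Type*} [SMul M X] [TopologicalSpace X] (x y : X) : Prop :=
  ∃ z : X, (z, z) ∈ closure (range fun g : M => (g • x, g • y))

theorem isProximal_iff_exists_ultrafilter {M X : Type*} [SMul M X] [TopologicalSpace X]
    {x y : X} :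
    IsProximal M x y ↔ ∃ (𝒰 : Ultrafilter M) (z : X),
      Tendsto (fun g : M => g • x) 𝒰 (𝓝 z) ∧ Tendsto (fun g : M => g • y) 𝒰 (𝓝 z) := by
  simp only [IsProximal, mem_closure_range_iff_exists_ultrafilter, nhds_prod_eq,
    tendsto_prod_iff']
  exact exists_comm

theorem IsProximal.of_subgroup {G X : Type*} [Group G] [MulAction G X] [TopologicalSpace X]
    {S : Subgroup G} {x y : X} (h : IsProximal S x y) : IsProximal G x y := by
  obtain ⟨z, hz⟩ := h
  refine ⟨z, closure_mono ?_ hz⟩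
  rintro _ ⟨s, rfl⟩
  exact ⟨s, rfl⟩

theorem IsCompact.mem_of_closure_orbit_inter_nonempty {M X : Type*} [Monoid M]
    [TopologicalSpace X] [T2Space X] [MulAction M X] [ContinuousConstSMul M X]
    {Y : Set X} (hY : IsCompact Y) (hYM : ∀ g : M, MapsTo (g • ·) Y Y) {p : X}
    (hp : (closure (MulAction.orbit M p) ∩ Y).Nonempty)
    (hdistal : ∀ y ∈ Y, IsProximal M p y → p = y) : p ∈ Y := by
  have := isCompact_iff_compactSpace.mp hY
  -- `f : Option Y → Y` records a limit of the maps `g • ·` on `Y` together with, at `none`, the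
  -- limit of `g • p`; for an idempotent `e` of this Ellis-type semigroup, `p` is proximal to
  -- `e none`.
  let pt : Option Y → X := fun z => z.elim p Subtype.val
  let T : Set (Option Y → Y) :=
    {f | ∃ 𝒰 : Ultrafilter M, ∀ z, Tendsto (fun g : M => g • pt z) 𝒰 (𝓝 (f z))}
  let : Semigroup (Option Y → Y) :=
    { mul := fun f f' z => f (some (f' z)), mul_assoc := fun _ _ _ => rfl }
  have hT_eq :
      T = (fun f z => (f z : X)) ⁻¹' closure (range fun g : M => fun z => g • pt z) := by
    ext f
    simp only [T, mem_ofPred_eq, mem_preimage, mem_closure_range_iff_exists_ultrafilter,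
      tendsto_pi_nhds]
  have hT_compact : IsCompact T := by
    rw [hT_eq]
    exact (isClosed_closure.preimage (by fun_prop)).isCompact
  have hT_nonempty : T.Nonempty := by
    obtain ⟨q, hq, hqY⟩ := hp
    obtain ⟨𝒰, h𝒰⟩ := mem_closure_range_iff_exists_ultrafilter.1 hq
    have : ∀ z : Option Y, ∃ c : Y, Tendsto (fun g : M => g • pt z) 𝒰 (𝓝 (c : X)) := by
      rintro (_ | y)
      · exact ⟨⟨q, hqY⟩, h𝒰⟩
      · obtain ⟨c, hcY, hc⟩ := hY.ultrafilter_le_nhds (𝒰.map (· • (y : X)))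
          (le_principal_iff.2 <| mem_map.2 <| univ_mem' fun g => hYM g y.2)
        exact ⟨⟨c, hcY⟩, hc⟩
    choose f hf using this
    exact ⟨f, 𝒰, hf⟩
  have hT_mul : ∀ f ∈ T, ∀ f' ∈ T, f * f' ∈ T := by
    rintro f ⟨𝒰, hf⟩ f' ⟨𝒱, hf'⟩
    refine ⟨𝒰 * 𝒱, fun z => Ultrafilter.tendsto_mul_of_tendsto (fun i => ?_) (hf (f' z))⟩
    exact ((hf' z).const_smul i).congr fun j => (mul_smul i j _).symm
  obtain ⟨e, ⟨𝒰, he⟩, hee⟩ := exists_idempotent_in_compact_subsemigroup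
    (fun r => continuous_pi fun z => continuous_apply (some (r z))) T hT_nonempty hT_compact hT_mul
  have hprox : IsProximal M p (e none) := by
    refine isProximal_iff_exists_ultrafilter.2 ⟨𝒰, e none, he none, ?_⟩
    have hfix : e (some (e none)) = e none := congrFun hee none
    have := he (some (e none))
    rwa [hfix] at this
  exact (hdistal _ (e none).2 hprox) ▸ (e none).2

section

variable {G : Type*} [Group G] [TopologicalSpace G]

theorem codistal_iff (K : Subgroup G) :
    Codistal K ↔ ∀ x y : G ⧸ K, IsProximal G x y → x = y := by
  have hset : ∀ x y : G, {p : (G ⧸ K) × (G ⧸ K) | ∃ g : G, p = (↑(g * x), ↑(g * y))} =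
      range fun g : G => (g • (x : G ⧸ K), g • (y : G ⧸ K)) := by
    intro x y
    ext p
    exact ⟨fun ⟨g, hg⟩ => ⟨g, hg.symm⟩, fun ⟨g, hg⟩ => ⟨g, hg.symm⟩⟩
  simp only [Codistal, IsProximal, hset, QuotientGroup.mk_surjective.forall, ne_eq, not_imp_not]

theorem isCompact_coe_image_of_compactSpace (K H : Subgroup G)
    [CompactSpace (H ⧸ K.subgroupOf H)] : IsCompact ((↑) '' (H : Set G) : Set (G ⧸ K)) := by
  let φ : H ⧸ K.subgroupOf H → G ⧸ K :=
    Quotient.lift (fun h : H => ((h : G) : G ⧸ K)) fun a b hab =>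
      QuotientGroup.eq.2 (by simpa [QuotientGroup.leftRel_apply, Subgroup.mem_subgroupOf] using hab)
  have hφ : Continuous φ :=
    continuous_quot_lift _ (QuotientGroup.continuous_mk.comp continuous_subtype_val)
  have hrange : range φ = (↑) '' (H : Set G) := by
    rw [← QuotientGroup.mk_surjective.range_comp]
    exact (range_comp _ Subtype.val).trans (by rw [Subtype.range_coe]; rfl)
  exact hrange ▸ isCompact_range hφ

variable [IsTopologicalGroup G]

theorem exists_tendsto_coe_of_tendsto_coe [WeaklyLocallyCompactSpace G] {K H : Subgroup G}
    (hKH : K ≤ H) [T2Space (G ⧸ H)] (hY : IsCompact ((↑) '' (H : Set G) : Set (G ⧸ K)))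
    (𝒰 : Ultrafilter G) {c : G} (hc : Tendsto (fun g : G => (g : G ⧸ H)) 𝒰 (𝓝 (c : G ⧸ H))) :
    ∃ a : G, (a : G ⧸ H) = c ∧ Tendsto (fun g : G => (g : G ⧸ K)) 𝒰 (𝓝 (a : G ⧸ K)) := by
  -- Eventually `g ∈ C * H` for a compact neighbourhood `C` of `c`, so `gK` stays in the compact
  -- set `C • (H/K)` and converges; the limit lies over `cH` since `G ⧸ H` is Hausdorff.
  obtain ⟨C, hC, hCc⟩ := exists_compact_mem_nhds c
  have hCH : ∀ᶠ g : G in 𝒰, (g : G ⧸ K) ∈ C • ((↑) '' (H : Set G) : Set (G ⧸ K)) := by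
    filter_upwards [hc ((QuotientGroup.isOpenMap_coe).image_mem_nhds hCc)] with g ⟨v, hvC, hvg⟩
    refine ⟨v, hvC, ((v⁻¹ * g : G) : G ⧸ K), ⟨v⁻¹ * g, QuotientGroup.eq.1 hvg, rfl⟩, ?_⟩
    simp [mul_inv_cancel_left]
  obtain ⟨q, -, hq⟩ := (hC.smul_set hY).ultrafilter_le_nhds (𝒰.map ((↑) : G → G ⧸ K))
    (le_principal_iff.2 hCH)
  obtain ⟨a, rfl⟩ := QuotientGroup.mk_surjective q
  have hq : Tendsto (fun g : G => (g : G ⧸ K)) 𝒰 (𝓝 (a : G ⧸ K)) := hq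
  have hproj : Continuous (Subgroup.quotientMapOfLE hKH) := continuous_id.quotient_map' _
  exact ⟨a, tendsto_nhds_unique ((hproj.tendsto _).comp hq) hc, hq⟩

theorem inv_smul_mem_closure_orbit {X : Type*} [TopologicalSpace X] [MulAction G X]
    [ContinuousSMul G X] (K : Subgroup G) {ℱ : Filter G} [ℱ.NeBot] {a : G} {p q : X}
    (ha : Tendsto (fun g : G => (g : G ⧸ K)) ℱ (𝓝 (a : G ⧸ K))) (hq : Tendsto (· • p) ℱ (𝓝 q)) :
    a⁻¹ • q ∈ closure (range fun k : K => (k : G) • p) := by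
  rw [mem_closure_iff_nhds]
  intro O hO
  have hcont : Tendsto (fun wx : G × X => wx.1⁻¹ • wx.2) (𝓝 a ×ˢ 𝓝 q) (𝓝 (a⁻¹ • q)) := by
    rw [← nhds_prod_eq]
    exact (continuous_fst.inv.smul continuous_snd).tendsto (a, q)
  obtain ⟨W, hW, O', hO', hWO⟩ := mem_prod_iff.1 (hcont hO)
  rw [QuotientGroup.nhds_eq] at ha
  obtain ⟨g, ⟨w, hwW, hwg⟩, hgO'⟩ := Filter.nonempty_of_mem
    (inter_mem (mem_map.1 (ha (image_mem_map hW))) (mem_map.1 (hq hO')))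
  have hk : w⁻¹ * g ∈ K := QuotientGroup.eq.1 hwg
  refine ⟨(w⁻¹ * g) • p, ?_, ⟨w⁻¹ * g, hk⟩, rfl⟩
  rw [mul_smul]
  exact hWO (mk_mem_prod hwW hgO')

theorem exists_mem_closure_orbit_of_isProximal [WeaklyLocallyCompactSpace G] {K H : Subgroup G}
    (hKH : K ≤ H) [T2Space (G ⧸ H)] (hY : IsCompact ((↑) '' (H : Set G) : Set (G ⧸ K)))
    {x y : G} (hxy : IsProximal G (x : G ⧸ H) (y : G ⧸ H)) :
    (closure (range fun k : K => (k : G) • ((x⁻¹ * y : G) : G ⧸ K)) ∩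
      (↑) '' (H : Set G)).Nonempty := by
  obtain ⟨𝒢, z, hx, hy⟩ := isProximal_iff_exists_ultrafilter.1 hxy
  obtain ⟨c, rfl⟩ := QuotientGroup.mk_surjective z
  obtain ⟨a, hac, ha⟩ := exists_tendsto_coe_of_tendsto_coe hKH hY (𝒢.map (· * x)) hx
  obtain ⟨b, hbc, hb⟩ := exists_tendsto_coe_of_tendsto_coe hKH hY (𝒢.map (· * y)) hy
  have hxyb :
      Tendsto (· • ((x⁻¹ * y : G) : G ⧸ K)) (𝒢.map (· * x) : Filter G) (𝓝 (b : G ⧸ K)) := by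
    rw [Ultrafilter.coe_map, tendsto_map'_iff] at hb ⊢
    exact hb.congr fun g => by simp [mul_assoc]
  exact ⟨_, inv_smul_mem_closure_orbit K ha hxyb, a⁻¹ * b,
    QuotientGroup.eq.1 (hac.trans hbc.symm), rfl⟩

end

/-- Let `G` be a topological group with a compact open subgroup and let `K ≤ H ≤ G` be
closed subgroups such that `K` is cocompact in `H` and codistal in `G`.  Then `H` is
codistal in `G`. -/
theorem codistal_of_cocompact {G : Type*} [Group G] [TopologicalSpace G]
    [IsTopologicalGroup G]
    (hcompactopen : ∃ U : Subgroup G, IsOpen (U : Set G) ∧ IsCompact (U : Set G))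
    (K H : Subgroup G) (hKH : K ≤ H)
    (hKc : IsClosed (K : Set G)) (hHc : IsClosed (H : Set G))
    (hcocompact : CompactSpace (H ⧸ K.subgroupOf H))
    (hKd : Codistal K) : Codistal H := by
  obtain ⟨U, hUo, hUc⟩ := hcompactopen
  have : LocallyCompactSpace G :=
    hUc.locallyCompactSpace_of_mem_nhds_of_group (hUo.mem_nhds U.one_mem)
  have : ContinuousConstSMul K (G ⧸ K) := ⟨fun k => continuous_const_smul (k : G)⟩
  have hY := isCompact_coe_image_of_compactSpace K H
  rw [codistal_iff] at hKd ⊢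
  refine QuotientGroup.mk_surjective.forall.2 fun x =>
    QuotientGroup.mk_surjective.forall.2 fun y hxy => ?_
  obtain ⟨h, hh, hhxy⟩ := hY.mem_of_closure_orbit_inter_nonempty (M := K)
    (p := ((x⁻¹ * y : G) : G ⧸ K))
    (fun k => by rintro _ ⟨h, hh, rfl⟩; exact ⟨k * h, H.mul_mem (hKH k.2) hh, rfl⟩)
    (exists_mem_closure_orbit_of_isProximal hKH hY hxy) (fun q _ h => hKd _ _ h.of_subgroup)
  exact QuotientGroup.eq.2 (by simpa using H.mul_mem hh (hKH (QuotientGroup.eq.1 hhxy)))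
end

section
/- Let G be a totally disconnected locally compact group that is a SIN group (has a base of identity neighbourhoods consisting of open normal subgroups), and let K be a closed subgroup of G. Then K is the intersection of the open subgroups of G that contain K as a cocompact subgroup. -/
open Topology

/-! Intersecting with a compact neighbourhood, every identity neighbourhood contains a compact
open normal subgroup `N`. Then `N ⊔ K = N * K` is open, and `K` is cocompact in it because the
quotient is the image of the compact set `N`. As `N` shrinks, the sets `N * K` cut out exactly the
closure of `K`, which is `K`. -/

namespace Subgroup

variable {G : Type*} [Group G] [TopologicalSpace G]

theorem compactSpace_quotient_subgroupOf_sup {N : Subgroup G} [N.Normal]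
    (hN : IsCompact (N : Set G)) (K : Subgroup G) :
    CompactSpace (↥(N ⊔ K) ⧸ K.subgroupOf (N ⊔ K)) := by
  have : CompactSpace N := isCompact_iff_compactSpace.mp hN
  let f : N → ↥(N ⊔ K) ⧸ K.subgroupOf (N ⊔ K) :=
    fun n => QuotientGroup.mk ⟨n, le_sup_left (a := N) n.2⟩
  have hf : Continuous f := continuous_quot_mk.comp (continuous_subtype_val.subtype_mk _)
  have hf_surj : Function.Surjective f := by
    intro q
    induction q using QuotientGroup.induction_on with | H w => ?_
    obtain ⟨n, hn, k, hk, hnk⟩ := mem_sup_of_normal_left.mp w.2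
    refine ⟨⟨n, hn⟩, QuotientGroup.eq.mpr ?_⟩
    rw [mem_subgroupOf, coe_mul, coe_inv, ← hnk, inv_mul_cancel_left]
    exact hk
  exact ⟨hf_surj.range_eq ▸ isCompact_range hf⟩

end Subgroup

section

variable {G : Type*} [Group G] [TopologicalSpace G] [IsTopologicalGroup G]

theorem mem_closure_of_forall_mem_normal_sup {K : Subgroup G} {g : G}
    (h : ∀ U ∈ 𝓝 (1 : G), ∃ N : Subgroup G, N.Normal ∧ (N : Set G) ⊆ U ∧ g ∈ N ⊔ K) :
    g ∈ closure (K : Set G) := by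
  refine mem_closure_iff_nhds_one.mpr fun U hU => ?_
  obtain ⟨N, hN, hNU, hg⟩ := h U hU
  obtain ⟨n, hn, k, hk, rfl⟩ := Subgroup.mem_sup_of_normal_left.mp hg
  exact ⟨k, hk, hNU (div_mul_cancel_right k n ▸ N.inv_mem hn)⟩

theorem exists_isCompact_isOpen_normal_subgroup_subset [LocallyCompactSpace G]
    (hSIN : ∀ V ∈ 𝓝 (1 : G), ∃ N : Subgroup G, N.Normal ∧ IsOpen (N : Set G) ∧
      (N : Set G) ⊆ V)
    {U : Set G} (hU : U ∈ 𝓝 (1 : G)) :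
    ∃ N : Subgroup G, N.Normal ∧ IsOpen (N : Set G) ∧ IsCompact (N : Set G) ∧
      (N : Set G) ⊆ U := by
  obtain ⟨C, hC, hC1⟩ := exists_compact_mem_nhds (1 : G)
  obtain ⟨N, hN, hNopen, hNsub⟩ := hSIN _ (Filter.inter_mem hC1 hU)
  exact ⟨N, hN, hNopen,
    hC.of_isClosed_subset (N.isClosed_of_isOpen hNopen) fun _ hx => (hNsub hx).1,
    fun _ hx => (hNsub hx).2⟩

end

theorem closed_subgroup_eq_iInter_open_cocompact_general {G : Type*} [Group G] [TopologicalSpace G]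
    [IsTopologicalGroup G] [LocallyCompactSpace G]
    (hSIN : ∀ V ∈ 𝓝 (1 : G), ∃ N : Subgroup G, N.Normal ∧ IsOpen (N : Set G) ∧
      (N : Set G) ⊆ V)
    (K : Subgroup G) (hK : IsClosed (K : Set G)) :
    (K : Set G) = ⋂ W ∈ {W : Subgroup G | IsOpen (W : Set G) ∧ K ≤ W ∧
      CompactSpace (W ⧸ K.subgroupOf W)}, (W : Set G) := by
  refine subset_antisymm (Set.subset_iInter₂ fun W hW => hW.2.1) fun g hg => ?_
  rw [← hK.closure_eq]
  refine mem_closure_of_forall_mem_normal_sup fun U hU => ?_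
  obtain ⟨N, hN, hNopen, hNcompact, hNU⟩ :=
    exists_isCompact_isOpen_normal_subgroup_subset hSIN hU
  refine ⟨N, hN, hNU, Set.mem_iInter₂.mp hg (N ⊔ K) ⟨?_, le_sup_right, ?_⟩⟩
  · exact Subgroup.isOpen_mono le_sup_left hNopen
  · exact Subgroup.compactSpace_quotient_subgroupOf_sup hNcompact K

/-- Let `G` be a totally disconnected locally compact SIN group (every identity
neighbourhood contains an open normal subgroup of `G`) and `K` a closed subgroup.  Then
`K` is the intersection of the open subgroups of `G` containing `K` as a cocompact
subgroup. -/
theorem closed_subgroup_eq_iInter_open_cocompact {G : Type*} [Group G] [TopologicalSpace G]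
    [IsTopologicalGroup G] [LocallyCompactSpace G] [TotallyDisconnectedSpace G] [T2Space G]
    (hSIN : ∀ V ∈ 𝓝 (1 : G), ∃ N : Subgroup G, N.Normal ∧ IsOpen (N : Set G) ∧
      (N : Set G) ⊆ V)
    (K : Subgroup G) (hK : IsClosed (K : Set G)) :
    (K : Set G) = ⋂ W ∈ {W : Subgroup G | IsOpen (W : Set G) ∧ K ≤ W ∧
      CompactSpace (W ⧸ K.subgroupOf W)}, (W : Set G) :=
  closed_subgroup_eq_iInter_open_cocompact_general hSIN K hK
end

section
/- Let G be a totally disconnected locally compact group and let H be a compactly generated closed subgroup of G having at most countably many open finite-index subgroups. Suppose the commensurator Comm_G(H) is open in G and for every finite subset X of Comm_G(H) there is a finite-index open normal subgroup K of H normalized by ⟨H, X⟩. Then there exists a finite-index open normal subgroup K of H whose normalizer N_G(K) is open in G. -/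
open Topology

/-- The commensurator of a subgroup `H` of `G`: the set of `g ∈ G` such that
`H ∩ gHg⁻¹` has finite index in both `H` and `gHg⁻¹`. -/
def commSet {G : Type*} [Group G] (H : Subgroup G) : Set G :=
  {g : G | (H.map (MulAut.conj g).toMonoidHom).relIndex H ≠ 0 ∧
    H.relIndex (H.map (MulAut.conj g).toMonoidHom) ≠ 0}

/-- The normalizer of a closed subgroup is closed. -/
lemma normalizer_isClosed {G : Type*} [Group G] [TopologicalSpace G] [IsTopologicalGroup G]
    (K : Subgroup G) (hK : IsClosed (K : Set G)) :
    IsClosed (Subgroup.normalizer (K : Set G) : Set G) := by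
  have hA : IsClosed {g : G | ∀ n ∈ K, g * n * g⁻¹ ∈ K} := by
    have : {g : G | ∀ n ∈ K, g * n * g⁻¹ ∈ K} = ⋂ n ∈ K, {g : G | g * n * g⁻¹ ∈ K} := by
      ext g; simp [Set.mem_iInter]
    rw [this]
    refine isClosed_biInter fun n hn => ?_
    have : {g : G | g * n * g⁻¹ ∈ K} = (fun g => g * n * g⁻¹) ⁻¹' (K : Set G) := rfl
    rw [this]
    exact hK.preimage (by continuity)
  have heq : (Subgroup.normalizer (K : Set G) : Set G)
      = {g : G | ∀ n ∈ K, g * n * g⁻¹ ∈ K} ∩ Inv.inv ⁻¹' {g : G | ∀ n ∈ K, g * n * g⁻¹ ∈ K} := by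
    ext g
    simp only [Set.mem_inter_iff, Set.mem_preimage, Set.mem_setOf_eq, SetLike.mem_coe,
      Subgroup.mem_normalizer_iff]
    constructor
    · intro h
      refine ⟨fun n hn => (h n).mp hn, fun n hn => ?_⟩
      have := (h (g⁻¹ * n * g⁻¹⁻¹)).mpr
      simpa [mul_assoc] using this (by simpa [mul_assoc] using hn)
    · rintro ⟨h1, h2⟩ n
      constructor
      · exact h1 n
      · intro hn
        have := h2 _ hn
        simpa [mul_assoc] using this
  rw [heq]
  exact hA.inter (hA.preimage continuous_inv)

/-- Let `G` be a totally disconnected locally compact group which is a Baire space, and let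
`H` be a compactly generated closed subgroup of `G` with at most countably many open
finite-index subgroups.  Suppose the commensurator of `H` is open in `G` and that for
every finite subset `X` of the commensurator there is a finite-index open normal subgroup
`K` of `H` normalized by `⟨H, X⟩`.  Then there is a finite-index open normal subgroup `K`
of `H` whose normalizer in `G` is open. -/
theorem exists_finiteIndex_open_normal_with_open_normalizer {G : Type*} [Group G]
    [TopologicalSpace G] [IsTopologicalGroup G] [LocallyCompactSpace G]
    [TotallyDisconnectedSpace G] [T2Space G] [BaireSpace G]
    (H : Subgroup G) (hHclosed : IsClosed (H : Set G))
    (hHcg : ∃ C : Set G, C ⊆ H ∧ IsCompact C ∧ Subgroup.closure C = H)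
    (hcount : {K : Subgroup H | IsOpen (K : Set H) ∧ K.index ≠ 0}.Countable)
    (hopen : IsOpen (commSet H))
    (hfin : ∀ X : Finset G, (X : Set G) ⊆ commSet H →
      ∃ K : Subgroup G, K ≤ H ∧ (∃ U : Set G, IsOpen U ∧ (K : Set G) = U ∩ H) ∧
        (K.subgroupOf H).index ≠ 0 ∧ (K.subgroupOf H).Normal ∧
        ∀ g ∈ Subgroup.closure ((H : Set G) ∪ X), ∀ k ∈ K, g * k * g⁻¹ ∈ K) :
    ∃ K : Subgroup G, K ≤ H ∧ (∃ U : Set G, IsOpen U ∧ (K : Set G) = U ∩ H) ∧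
      (K.subgroupOf H).index ≠ 0 ∧ (K.subgroupOf H).Normal ∧
      IsOpen (Subgroup.normalizer (K : Set G) : Set G) := by
  classical
  set T : Set (Subgroup H) :=
    {L | IsOpen (L : Set H) ∧ L.index ≠ 0 ∧ L.Normal} with hT
  have hTcount : T.Countable := by
    refine hcount.mono ?_
    rintro L ⟨h1, h2, -⟩
    exact ⟨h1, h2⟩
  haveI : Countable ↥T := hTcount.to_subtype
  -- each L in T gives a closed subgroup of G
  have hclosedK : ∀ L : Subgroup H, IsOpen (L : Set H) →
      IsClosed ((L.map H.subtype : Subgroup G) : Set G) := by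
    intro L hLopen
    have hLclosed : IsClosed (L : Set H) := L.isClosed_of_isOpen hLopen
    have hemb : Topology.IsClosedEmbedding ((↑) : H → G) :=
      hHclosed.isClosedEmbedding_subtypeVal
    have : ((L.map H.subtype : Subgroup G) : Set G) = ((↑) : H → G) '' (L : Set H) := by
      ext g; simp [Subgroup.mem_map]
    rw [this]
    exact hemb.isClosed_iff_image_isClosed.mp hLclosed
  -- the family of closed sets
  set f : Option ↥T → Set G := fun o =>
    o.elim ((commSet H)ᶜ)
      (fun L => (Subgroup.normalizer ((Subgroup.map H.subtype L.1 : Subgroup G) : Set G) : Set G)) with hf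
  have hfc : ∀ i, IsClosed (f i) := by
    rintro (_ | ⟨L, hL⟩)
    · exact hopen.isClosed_compl
    · exact normalizer_isClosed _ (hclosedK L hL.1)
  have hU : ⋃ i, f i = Set.univ := by
    rw [Set.eq_univ_iff_forall]
    intro g
    by_cases hg : g ∈ commSet H
    · obtain ⟨K, hKH, hKopen, hKidx, hKnormal, hKconj⟩ :=
        hfin {g} (by simpa using hg)
      set L : Subgroup H := K.subgroupOf H with hLdef
      have hLopen : IsOpen (L : Set H) := by
        obtain ⟨U, hUopen, hUeq⟩ := hKopen
        have : (L : Set H) = ((↑) : H → G) ⁻¹' U := by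
          ext h
          simp only [hLdef, Subgroup.subgroupOf, Subgroup.coe_comap, Set.mem_preimage,
            Subgroup.coe_subtype, SetLike.mem_coe]
          constructor
          · intro hh
            have : (h : G) ∈ (K : Set G) := hh
            rw [hUeq] at this
            exact this.1
          · intro hh
            have : (h : G) ∈ U ∩ H := ⟨hh, h.2⟩
            rw [← hUeq] at this
            exact this
        rw [this]
        exact hUopen.preimage continuous_subtype_val
      have hLT : L ∈ T := ⟨hLopen, hKidx, hKnormal⟩
      have hmap : (L : Subgroup H).map H.subtype = K := by
        rw [hLdef, Subgroup.subgroupOf_map_subtype, inf_of_le_left hKH]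
      have hgmem : g ∈ Subgroup.closure ((H : Set G) ∪ {g}) :=
        Subgroup.subset_closure (Set.mem_union_right _ rfl)
      refine Set.mem_iUnion.mpr ⟨some ⟨L, hLT⟩, ?_⟩
      show g ∈ (Subgroup.normalizer ((Subgroup.map H.subtype L : Subgroup G) : Set G) : Set G)
      rw [hmap]
      rw [SetLike.mem_coe, Subgroup.mem_normalizer_iff]
      intro n
      constructor
      · intro hn; exact hKconj g (by simpa using hgmem) n hn
      · intro hn
        have := hKconj g⁻¹ (by simpa using (Subgroup.closure ((H : Set G) ∪ {g})).inv_mem hgmem)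
          (g * n * g⁻¹) hn
        simpa [mul_assoc] using this
    · exact Set.mem_iUnion.mpr ⟨none, hg⟩
  have hdense := dense_iUnion_interior_of_closed hfc hU
  have hone : (1 : G) ∈ commSet H := by
    have hm : H.map (MulAut.conj (1 : G)).toMonoidHom = H := by
      ext x
      simp [Subgroup.mem_map, MulAut.conj_apply]
    exact ⟨by rw [hm]; simp [Subgroup.relIndex_self],
      by rw [hm]; simp [Subgroup.relIndex_self]⟩
  obtain ⟨g, hg1, hg2⟩ := hdense.exists_mem_open hopen ⟨1, hone⟩
  obtain ⟨i, hgi⟩ := Set.mem_iUnion.mp hg1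
  match i with
  | none =>
    have hgc : g ∈ (commSet H)ᶜ := interior_subset hgi
    exact absurd hg2 hgc
  | some ⟨L, hLT⟩ =>
    refine ⟨L.map H.subtype, ?_, ?_, ?_, ?_, ?_⟩
    · exact Subgroup.map_subtype_le L
    · obtain ⟨hLopen, hLidx, hLnorm⟩ := hLT
      rw [isOpen_induced_iff] at hLopen
      obtain ⟨U, hUopen, hUeq⟩ := hLopen
      refine ⟨U, hUopen, ?_⟩
      ext x
      simp only [Set.mem_inter_iff, SetLike.mem_coe, Subgroup.mem_map]
      constructor
      · rintro ⟨h, hh, rfl⟩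
        have : h ∈ ((↑) : H → G) ⁻¹' U := hUeq ▸ hh
        exact ⟨this, h.2⟩
      · rintro ⟨hxU, hxH⟩
        exact ⟨⟨x, hxH⟩, by rw [← SetLike.mem_coe, ← hUeq]; exact hxU, rfl⟩
    · rw [Subgroup.subgroupOf, Subgroup.comap_map_eq_self_of_injective H.subtype_injective]
      exact hLT.2.1
    · rw [Subgroup.subgroupOf, Subgroup.comap_map_eq_self_of_injective H.subtype_injective]
      exact hLT.2.2
    · exact Subgroup.isOpen_of_mem_nhds _ (mem_interior_iff_mem_nhds.mp hgi)
end

section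
/- Let H be a group acting by homeomorphisms on a completely metrizable space X and let x ∈ X. Then x has generic neighbourhoods (every H-invariant neighbourhood of x is dense in X) if and only if there is a dense G_δ set D ⊆ X such that x ∈ cl(H·y) for every y ∈ D. -/
open Topology Pointwise

/-- Let a group `H` act by homeomorphisms on a completely metrizable space `X` and let
`x ∈ X`.  Then `x` has generic neighbourhoods (every `H`-invariant neighbourhood of `x` is
dense) if and only if there is a dense `Gδ` set `D` such that `x ∈ cl(H·y)` for every
`y ∈ D`. -/
theorem generic_neighbourhoods_iff_dense_Gdelta {H X : Type*} [Group H] [MetricSpace X]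
    [CompleteSpace X] [MulAction H X] (hc : ∀ h : H, Continuous fun x : X => h • x)
    (x : X) :
    (∀ A : Set X, A ∈ 𝓝 x → (∀ h : H, h • A = A) → Dense A) ↔
    ∃ D : Set X, Dense D ∧ IsGδ D ∧ ∀ y ∈ D, x ∈ closure (MulAction.orbit H y) := by
  constructor
  · intro hgen
    -- V n = union of translates of the ball of radius 1/(n+1) around x
    set V : ℕ → Set X := fun n => ⋃ h : H, h • Metric.ball x (1 / (n + 1)) with hV
    have hVopen : ∀ n, IsOpen (V n) := by
      intro n
      refine isOpen_iUnion fun h => ?_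
      have : h • Metric.ball x (1 / (n + 1)) =
          (fun z : X => h⁻¹ • z) ⁻¹' Metric.ball x (1 / (n + 1)) := by
        ext z
        simp [Set.mem_smul_set_iff_inv_smul_mem]
      rw [this]
      exact Metric.isOpen_ball.preimage (hc h⁻¹)
    have hVinv : ∀ n, ∀ g : H, g • V n = V n := by
      intro n g
      ext z
      simp only [hV, Set.smul_set_iUnion, Set.mem_iUnion]
      constructor
      · rintro ⟨h, hz⟩
        exact ⟨g * h, by rwa [mul_smul]⟩
      · rintro ⟨h, hz⟩
        exact ⟨g⁻¹ * h, by rwa [mul_smul, smul_inv_smul]⟩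
    have hxV : ∀ n, V n ∈ 𝓝 x := by
      intro n
      have hball : Metric.ball x (1 / (n + 1)) ⊆ V n := by
        intro z hz
        exact Set.mem_iUnion.2 ⟨1, by simpa using hz⟩
      exact Filter.mem_of_superset
        (Metric.ball_mem_nhds x (by positivity)) hball
    have hVdense : ∀ n, Dense (V n) := fun n =>
      hgen (V n) (hxV n) (hVinv n)
    refine ⟨⋂ n, V n, dense_iInter_of_isOpen hVopen hVdense,
      .iInter_of_isOpen hVopen, ?_⟩
    intro y hy
    rw [Metric.mem_closure_iff]
    intro ε hε
    obtain ⟨n, hn⟩ := exists_nat_one_div_lt hε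
    have hyn : y ∈ V n := Set.mem_iInter.1 hy n
    obtain ⟨h, hz⟩ := Set.mem_iUnion.1 hyn
    rw [Set.mem_smul_set_iff_inv_smul_mem] at hz
    refine ⟨h⁻¹ • y, MulAction.mem_orbit y h⁻¹, ?_⟩
    rw [dist_comm]
    calc dist (h⁻¹ • y) x < 1 / (n + 1) := hz
      _ < ε := hn
  · rintro ⟨D, hD, _, hDx⟩
    intro A hA hAinv
    rw [dense_iff_inter_open]
    intro U hU hUne
    obtain ⟨y, hyU, hyD⟩ := hD.inter_open_nonempty U hU hUne
    have hx : x ∈ closure (MulAction.orbit H y) := hDx y hyD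
    have : (A ∩ MulAction.orbit H y).Nonempty := by
      have hmem : A ∩ MulAction.orbit H y ∈ 𝓝 x ⊓ Filter.principal (MulAction.orbit H y) :=
        Filter.inter_mem_inf hA (Filter.mem_principal_self _)
      have hne : (𝓝 x ⊓ Filter.principal (MulAction.orbit H y)).NeBot :=
        mem_closure_iff_clusterPt.1 hx
      exact hne.nonempty_of_mem hmem
    obtain ⟨z, hzA, h, hz⟩ := this
    have hyA : y ∈ A := by
      have : h⁻¹ • z ∈ h⁻¹ • A := Set.smul_mem_smul_set hzA
      rwa [hAinv h⁻¹, ← hz, inv_smul_smul] at this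
    exact ⟨y, hyU, hyA⟩
end

section
/- Let H be a group acting by homeomorphisms on a completely metrizable space X. Suppose x ∈ X has generic neighbourhoods (every H-invariant neighbourhood of x is dense) and the orbit closure cl(Hx) is compact and consists of distal points for the action. Then X = cl(Hx) and the action of H on X is minimal. -/
/-!
Let `K` be the orbit closure of `x`. The sets `H • U`, for `U` in a countable basis of open
neighbourhoods of `x`, are invariant open neighbourhoods of `x`, hence dense, so by Baire the
points `y` with `x ∈ closure (H • y)` are dense. Each such `y` lies in `K`: in the Ellis semigroup
`E ⊆ K → K` of the compact distal system `K`, an idempotent `u` satisfies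
`(u z, u z) = (u z, u (u z)) ∈ closure (H • (z, u z))`, so `u = id`; hence every `p ∈ E` has a
left inverse `q ∈ E` (take an idempotent of the compact semigroup `E ∘ p`). Choosing `p ∈ E`
with `(p k, x) ∈ closure (H • (k, y))` for all `k ∈ K` and applying `q`, the point `k = q x`
satisfies `(k, k) ∈ closure (H • (k, y))`, so `y` is proximal to the distal point `k` and
`y = k ∈ K`. Thus `K` is closed and dense, i.e. `K = X`, and the same argument with the roles
of `x` and `y` exchanged gives `x ∈ closure (H • y)` for every `y`, which is minimality.
-/

open Topology Pointwise MulAction Set Filter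

section OrbitClosure

variable {H X Y : Type*} [Monoid H] [TopologicalSpace X] [MulAction H X] [TopologicalSpace Y]
  [MulAction H Y]

variable (H) in
def Proximal (z w : X) : Prop :=
  ∃ v, (v, v) ∈ closure (orbit H (z, w))

variable (H) in
def IsDistalPoint (z : X) : Prop :=
  ∀ w, Proximal H z w → w = z

theorem map_mem_closure_orbit {f : X → Y} (hf : Continuous f)
    (hfs : ∀ (h : H) (a : X), f (h • a) = h • f a) {a b : X} (hb : b ∈ closure (orbit H a)) :
    f b ∈ closure (orbit H (f a)) :=
  map_mem_closure hf hb (by rintro _ ⟨h, rfl⟩; exact ⟨h, (hfs h a).symm⟩)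

variable [ContinuousConstSMul H X]

theorem closure_orbit_subset_of_mem {a b : X} (hb : b ∈ closure (orbit H a)) :
    closure (orbit H b) ⊆ closure (orbit H a) :=
  closure_minimal (by rintro _ ⟨h, rfl⟩; exact smul_closure_orbit_subset h a ⟨b, hb, rfl⟩)
    isClosed_closure

variable (H) in
def orbitClosure (x : X) : SubMulAction H X where
  carrier := closure (orbit H x)
  smul_mem' h _ hz := smul_closure_orbit_subset h x ⟨_, hz, rfl⟩

instance (x : X) : ContinuousConstSMul H (orbitClosure H x) :=
  Topology.IsInducing.subtypeVal.continuousConstSMul id rfl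

end OrbitClosure

section Ellis

variable {H Y : Type*} [Monoid H] [TopologicalSpace Y] [MulAction H Y]

variable (H Y) in
def ellisSemigroup : Set (Y → Y) :=
  closure (range fun (h : H) (y : Y) => h • y)

theorem apply_pair_mem_closure_orbit {f : Y → Y} (hf : f ∈ ellisSemigroup H Y) (a b : Y) :
    (f a, f b) ∈ closure (orbit H (a, b)) :=
  map_mem_closure (f := fun F : Y → Y => (F a, F b))
    ((continuous_apply a).prodMk (continuous_apply b)) hf
    (by rintro _ ⟨h, rfl⟩; exact ⟨h, rfl⟩)

theorem exists_mem_ellisSemigroup_pair_mem_closure_orbit [CompactSpace Y] {Z : Type*}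
    [TopologicalSpace Z] [MulAction H Z] {x y : Z} (hx : x ∈ closure (orbit H y)) :
    ∃ p ∈ ellisSemigroup H Y, ∀ k : Y, (p k, x) ∈ closure (orbit H (k, y)) := by
  set C := closure (range fun h : H => ((fun k : Y => h • k), h • y))
  -- `Prod.snd` is a closed map because `Y → Y` is compact.
  have hx' : x ∈ Prod.snd '' C :=
    closure_minimal (by rintro _ ⟨h, rfl⟩; exact ⟨_, subset_closure ⟨h, rfl⟩, rfl⟩)
      (isClosedMap_snd_of_compactSpace _ isClosed_closure) hx
  obtain ⟨⟨p, _⟩, hpx, rfl⟩ := hx'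
  refine ⟨p, map_mem_closure continuous_fst hpx (by rintro _ ⟨h, rfl⟩; exact ⟨h, rfl⟩),
    fun k => map_mem_closure (f := fun F : (Y → Y) × Z => (F.1 k, F.2))
      ((continuous_apply k).fst'.prodMk continuous_snd) hpx ?_⟩
  rintro _ ⟨h, rfl⟩
  exact ⟨h, rfl⟩

theorem eq_id_of_mem_ellisSemigroup_of_comp_self (hdist : ∀ z : Y, IsDistalPoint H z)
    {u : Y → Y} (hu : u ∈ ellisSemigroup H Y) (huu : u ∘ u = u) : u = id :=
  funext fun z => hdist z (u z)
    ⟨u z, by simpa only [← Function.comp_apply (f := u), huu] using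
      apply_pair_mem_closure_orbit hu z (u z)⟩

variable [ContinuousConstSMul H Y]

theorem comp_mem_ellisSemigroup {f g : Y → Y} (hf : f ∈ ellisSemigroup H Y)
    (hg : g ∈ ellisSemigroup H Y) : f ∘ g ∈ ellisSemigroup H Y := by
  have hsmul_comp (h : H) : (fun y => h • y) ∘ g ∈ ellisSemigroup H Y :=
    map_mem_closure (f := fun F : Y → Y => (fun y => h • y) ∘ F)
      (continuous_pi fun y => (continuous_apply y).const_smul h) hg
      (by rintro _ ⟨h', rfl⟩; exact ⟨h * h', funext fun y => mul_smul h h' y⟩)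
  have hcomp_g : MapsTo (fun F : Y → Y => F ∘ g) (range fun (h : H) (y : Y) => h • y)
      (ellisSemigroup H Y) := by
    rintro _ ⟨h, rfl⟩
    exact hsmul_comp h
  exact hcomp_g.closure_left (continuous_pi fun y => continuous_apply (g y)) isClosed_closure hf

theorem exists_comp_eq_id_of_mem_ellisSemigroup [CompactSpace Y] [T2Space Y]
    (hdist : ∀ z : Y, IsDistalPoint H z) {f : Y → Y} (hf : f ∈ ellisSemigroup H Y) :
    ∃ g ∈ ellisSemigroup H Y, g ∘ f = id := by
  let _ : Semigroup (Y → Y) := { mul := (· ∘ ·), mul_assoc := fun _ _ _ => rfl }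
  have hcomp_right (r : Y → Y) : Continuous fun F : Y → Y => F ∘ r :=
    continuous_pi fun y => continuous_apply (r y)
  obtain ⟨_, ⟨g, hg, rfl⟩, hidem⟩ := exists_idempotent_in_compact_subsemigroup hcomp_right
    ((· ∘ f) '' ellisSemigroup H Y) ⟨_, f, hf, rfl⟩
    (isClosed_closure.isCompact.image (hcomp_right f))
    (by rintro _ ⟨a, ha, rfl⟩ _ ⟨b, hb, rfl⟩
        exact ⟨(a ∘ f) ∘ b, comp_mem_ellisSemigroup (comp_mem_ellisSemigroup ha hf) hb, rfl⟩)
  exact ⟨g, hg, eq_id_of_mem_ellisSemigroup_of_comp_self hdist (comp_mem_ellisSemigroup hg hf)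
    hidem⟩

end Ellis

section Distal

variable {H X : Type*} [Monoid H] [TopologicalSpace X] [T2Space X] [MulAction H X]
  [ContinuousConstSMul H X]

theorem mem_closure_orbit_of_mem_closure_orbit_of_isDistalPoint {x y : X}
    (hcomp : IsCompact (closure (orbit H x)))
    (hdist : ∀ z ∈ closure (orbit H x), IsDistalPoint H z)
    (hxy : x ∈ closure (orbit H y)) : y ∈ closure (orbit H x) := by
  let K := orbitClosure H x
  have : CompactSpace K := isCompact_iff_compactSpace.mp hcomp
  have hval : Continuous (Prod.map Subtype.val Subtype.val : K × K → X × X) :=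
    continuous_subtype_val.prodMap continuous_subtype_val
  have hdistK (z : K) : IsDistalPoint H z := fun w ⟨v, hv⟩ =>
    Subtype.ext (hdist z z.2 w ⟨v, map_mem_closure_orbit hval (fun _ _ => rfl) hv⟩)
  obtain ⟨p, hp, hpx⟩ := exists_mem_ellisSemigroup_pair_mem_closure_orbit (Y := K) hxy
  obtain ⟨q, hq, hqp⟩ := exists_comp_eq_id_of_mem_ellisSemigroup hdistK hp
  let x₀ : K := ⟨x, subset_closure (mem_orbit_self x)⟩
  set k := q x₀
  have hpk : ((p k : X), x) ∈ closure (orbit H ((k : X), y)) :=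
    map_mem_closure_orbit (continuous_subtype_val.prodMap continuous_id) (fun _ _ => rfl) (hpx k)
  have hkk : ((k : X), (k : X)) ∈ closure (orbit H ((p k : X), x)) := by
    have hqpk : q (p k) = k := congrFun hqp k
    simpa only [Prod.map, hqpk] using
      map_mem_closure_orbit hval (fun _ _ => rfl) (apply_pair_mem_closure_orbit hq (p k) x₀)
  rw [hdist k k.2 y ⟨k, closure_orbit_subset_of_mem hpk hkk⟩]
  exact k.2

end Distal

theorem dense_setOf_mem_closure_orbit {G X : Type*} [Group G] [TopologicalSpace X]
    [MulAction G X] [ContinuousConstSMul G X] [BaireSpace X] {x : X} [(𝓝 x).IsCountablyGenerated]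
    (hgen : ∀ A ∈ 𝓝 x, (∀ g : G, g • A = A) → Dense A) :
    Dense {y | x ∈ closure (orbit G y)} := by
  obtain ⟨U, hU, hbasis⟩ := (nhds_basis_opens x).exists_antitone_subbasis
  set V : ℕ → Set X := fun n => ⋃ h : G, h • U n
  have hVopen n : IsOpen (V n) := isOpen_iUnion fun h => (hU n).2.smul h
  have hVnhds n : V n ∈ 𝓝 x :=
    mem_of_superset ((hU n).2.mem_nhds (hU n).1) (subset_iUnion_of_subset 1 (by simp))
  have hVinv n (g : G) : g • V n = V n := by
    simp only [V, smul_set_iUnion, smul_smul]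
    exact (Equiv.mulLeft g).surjective.iUnion_comp (fun h => h • U n)
  refine (dense_iInter_of_isOpen hVopen fun n => hgen _ (hVnhds n) (hVinv n)).mono ?_
  intro y hy
  refine (mem_closure_iff_nhds_basis hbasis.1).2 fun n _ => ?_
  obtain ⟨h, hh⟩ := mem_iUnion.1 (mem_iInter.1 hy n)
  exact ⟨h⁻¹ • y, mem_orbit y h⁻¹, mem_smul_set_iff_inv_smul_mem.1 hh⟩

/-- Let a group `H` act by homeomorphisms on a completely metrizable space `X`.  Suppose
`x ∈ X` has generic neighbourhoods (every `H`-invariant neighbourhood of `x` is dense) and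
the orbit closure of `x` is compact and consists of distal points.  Then `X` is the orbit
closure of `x` and the action of `H` on `X` is minimal. -/
theorem eq_orbitClosure_of_generic_distal {H X : Type*} [Group H] [MetricSpace X]
    [CompleteSpace X] [MulAction H X] (hc : ∀ h : H, Continuous fun x : X => h • x)
    (x : X)
    (hgen : ∀ A : Set X, A ∈ 𝓝 x → (∀ h : H, h • A = A) → Dense A)
    (hcomp : IsCompact (closure (MulAction.orbit H x)))
    (hdist : ∀ z ∈ closure (MulAction.orbit H x), ∀ w : X, w ≠ z →
      ¬ ∃ v : X, (v, v) ∈ closure {p : X × X | ∃ h : H, p = (h • z, h • w)}) :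
    closure (MulAction.orbit H x) = Set.univ ∧
    ∀ y : X, Dense (MulAction.orbit H y) := by
  have : ContinuousConstSMul H X := ⟨hc⟩
  have hdistal : ∀ z ∈ closure (orbit H x), IsDistalPoint H z := fun z hz w hzw =>
    of_not_not fun hne => hdist z hz w hne <| by
      simpa only [Proximal, orbit, range, Prod.smul_mk, eq_comm] using hzw
  have huniv : closure (orbit H x) = univ := by
    have hsub : {y | x ∈ closure (orbit H y)} ⊆ closure (orbit H x) := fun _ =>
      mem_closure_orbit_of_mem_closure_orbit_of_isDistalPoint hcomp hdistal
    simpa only [closure_closure] using ((dense_setOf_mem_closure_orbit hgen).mono hsub).closure_eq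
  refine ⟨huniv, fun y => dense_iff_closure_eq.2 (eq_univ_of_univ_subset ?_)⟩
  have hx : x ∈ closure (orbit H y) :=
    mem_closure_orbit_of_mem_closure_orbit_of_isDistalPoint
      (hcomp.of_isClosed_subset isClosed_closure (huniv ▸ subset_univ _))
      (fun z _ => hdistal z (huniv ▸ mem_univ z)) (huniv ▸ mem_univ y)
  exact huniv ▸ closure_orbit_subset_of_mem hx
end
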